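/- arXiv:2511.06498 — 5 statements merged into one kernel-verified Lean document; each statement's English description precedes it below -/
import Mathlib

section
/- Characterization of perfect dependence as global maximality (Theorem 1.2, Axiom O4). Let A ⊆ [0,1] be closed and let R_A be the class of all random vectors (Y,X) with Y real-valued, X finite-dimensional, and closure(Range(F_Y)) = A. For (Y,X) ∈ R_A: (Y',X') ⪯ccx (Y,X) holds for all (Y',X') ∈ R_A if and only if Y is perfectly dependent on X, i.e. Y = f(X) almost surely for some measurable function f : ℝ^p → ℝ. -/
open MeasureTheory ProbabilityTheory Set Filter

noncomputable section

namespace CCXPaper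

variable {Ω Ω' : Type*} [MeasurableSpace Ω] [MeasurableSpace Ω']

/-- A measure is non-atomic in the measure-theoretic sense: every set of positive
measure contains a measurable subset of strictly smaller positive measure. -/
def Nonatomic (P : Measure Ω) : Prop :=
  ∀ s : Set Ω, MeasurableSet s → 0 < P s →
    ∃ t : Set Ω, MeasurableSet t ∧ t ⊆ s ∧ 0 < P t ∧ P t < P s

/-- Cumulative distribution function of the real random variable `Y` under `P`. -/
def cdfRV (P : Measure Ω) (Y : Ω → ℝ) (y : ℝ) : ℝ :=
  (P {ω | Y ω ≤ y}).toReal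

/-- Quantile function `q_Y(v) = inf {y | F_Y(y) ≥ v}`. -/
def quantRV (P : Measure Ω) (Y : Ω → ℝ) (v : ℝ) : ℝ :=
  sInf {y : ℝ | v ≤ cdfRV P Y y}

/-- Convex order between real random variables (on possibly different spaces):
`E[φ(S)] ≤ E[φ(T)]` for every convex `φ : ℝ → ℝ`. -/
def CxLE (P : Measure Ω) (S : Ω → ℝ) (P' : Measure Ω') (T : Ω' → ℝ) : Prop :=
  ∀ φ : ℝ → ℝ, ConvexOn ℝ Set.univ φ →
    ∫ ω, φ (S ω) ∂P ≤ ∫ ω, φ (T ω) ∂P'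

/-- Conditional probability `P(s | X)` as a random variable (a version of the
conditional expectation of the indicator of `s` given `σ(X)`). -/
def condProb {β : Type*} [MeasurableSpace β] (P : Measure Ω) (X : Ω → β) (s : Set Ω) :
    Ω → ℝ :=
  P[s.indicator (fun _ => (1 : ℝ)) | MeasurableSpace.comap X inferInstance]

/-- Conditional survival probability `P(Y ≥ y | X)`. -/
def condProbGE {β : Type*} [MeasurableSpace β] (P : Measure Ω) (Y : Ω → ℝ) (X : Ω → β)
    (y : ℝ) : Ω → ℝ :=
  condProb P X {ω | y ≤ Y ω}

/-- Conditional strict survival probability `P(Y > y | X)`. -/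
def condProbGT {β : Type*} [MeasurableSpace β] (P : Measure Ω) (Y : Ω → ℝ) (X : Ω → β)
    (y : ℝ) : Ω → ℝ :=
  condProb P X {ω | y < Y ω}

/-- Conditional cumulative probability `P(Y ≤ y | X)`. -/
def condProbLE {β : Type*} [MeasurableSpace β] (P : Measure Ω) (Y : Ω → ℝ) (X : Ω → β)
    (y : ℝ) : Ω → ℝ :=
  condProb P X {ω | Y ω ≤ y}

/-- Conditional strict cumulative probability `P(Y < y | X)`. -/
def condProbLT {β : Type*} [MeasurableSpace β] (P : Measure Ω) (Y : Ω → ℝ) (X : Ω → β)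
    (y : ℝ) : Ω → ℝ :=
  condProb P X {ω | Y ω < y}

/-- The conditional convex order `(Y, X) ⪯ccx (Y', X')`:
`P(Y ≥ q_Y(v) | X) ≤cx P(Y' ≥ q_{Y'}(v) | X')` for all `v ∈ (0,1)`. -/
def CCX {β γ : Type*} [MeasurableSpace β] [MeasurableSpace γ]
    (P : Measure Ω) (Y : Ω → ℝ) (X : Ω → β)
    (P' : Measure Ω') (Y' : Ω' → ℝ) (X' : Ω' → γ) : Prop :=
  ∀ v ∈ Set.Ioo (0 : ℝ) 1,
    CxLE P (condProbGE P Y X (quantRV P Y v)) P' (condProbGE P' Y' X' (quantRV P' Y' v))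

/-- Equality in the conditional convex order: `(Y, X) =ccx (Y', X')`. -/
def CCXeq {β γ : Type*} [MeasurableSpace β] [MeasurableSpace γ]
    (P : Measure Ω) (Y : Ω → ℝ) (X : Ω → β)
    (P' : Measure Ω') (Y' : Ω' → ℝ) (X' : Ω' → γ) : Prop :=
  CCX P Y X P' Y' X' ∧ CCX P' Y' X' P Y X

/-- `Y` and `Z` are conditionally independent given `X`: for every Borel `B ⊆ ℝ`,
`P(Y ∈ B | (X, Z)) = P(Y ∈ B | X)` almost surely. -/
def CondIndepGiven {β γ : Type*} [MeasurableSpace β] [MeasurableSpace γ]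
    (P : Measure Ω) (Y : Ω → ℝ) (Z : Ω → γ) (X : Ω → β) : Prop :=
  ∀ B : Set ℝ, MeasurableSet B →
    condProb P (fun ω => (X ω, Z ω)) (Y ⁻¹' B) =ᵐ[P] condProb P X (Y ⁻¹' B)

/-- `Y` is perfectly dependent on `X`: `Y = f(X)` a.s. for some measurable `f`. -/
def PerfectDep {β : Type*} [MeasurableSpace β] (P : Measure Ω) (Y : Ω → ℝ) (X : Ω → β) :
    Prop :=
  ∃ f : β → ℝ, Measurable f ∧ Y =ᵐ[P] fun ω => f (X ω)

/-- Concordance order for bivariate random vectors `(T, S) ≤c (T', S')`. -/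
def ConcordLE (P : Measure Ω) (T S : Ω → ℝ) (P' : Measure Ω') (T' S' : Ω' → ℝ) : Prop :=
  ∀ t s : ℝ,
    P {ω | T ω ≤ t ∧ S ω ≤ s} ≤ P' {ω | T' ω ≤ t ∧ S' ω ≤ s} ∧
    P {ω | t < T ω ∧ s < S ω} ≤ P' {ω | t < T' ω ∧ s < S' ω}

/-- The bivariate random vector `(W₁, W₂)` is stochastically increasing (SI):
for each bounded increasing `f`, a version of `E[f(W₁) | W₂]` is an increasing
function of `W₂`. -/
def SIvec (P : Measure Ω) (W₁ W₂ : Ω → ℝ) : Prop :=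
  ∀ f : ℝ → ℝ, Monotone f → (∃ C : ℝ, ∀ x, |f x| ≤ C) →
    ∃ m : ℝ → ℝ, Monotone m ∧
      (fun ω => m (W₂ ω)) =ᵐ[P]
        P[(fun ω => f (W₁ ω)) | MeasurableSpace.comap W₂ inferInstance]

/-- `G` is a cumulative distribution function on `ℝ`. -/
def IsCDF (G : ℝ → ℝ) : Prop :=
  Monotone G ∧ (∀ y : ℝ, ContinuousWithinAt G (Set.Ici y) y) ∧
    Tendsto G atBot (nhds 0) ∧ Tendsto G atTop (nhds 1)

/-- `(F u)_{u ∈ (0,1)}` is a rearranged conditional distribution family for `(Y, X)`: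
each `F u` is a cdf, `u ↦ F u y` is decreasing, and for each `y` the function
`u ↦ F u y` on `(0,1)` is a rearrangement of (i.e. equidistributed with)
`P(Y ≤ y | X)`. -/
def IsRearrangedFamily {β : Type*} [MeasurableSpace β]
    (P : Measure Ω) (Y : Ω → ℝ) (X : Ω → β) (F : ℝ → ℝ → ℝ) : Prop :=
  (∀ u ∈ Set.Ioo (0 : ℝ) 1, IsCDF (F u)) ∧
  (∀ y : ℝ, AntitoneOn (fun u => F u y) (Set.Ioo (0 : ℝ) 1)) ∧
  (∀ y w : ℝ,
    volume {u ∈ Set.Ioo (0 : ℝ) 1 | w ≤ F u y} = P {ω | w ≤ condProbLE P Y X y ω})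

/-- Rearranged quantile transform `q^{↑u}_{Y|X}(t) = inf {y | F_u(y) ≥ t}`. -/
def qArr (F : ℝ → ℝ → ℝ) (u t : ℝ) : ℝ :=
  sInf {y : ℝ | t ≤ F u y}

/-- The uniform distribution on `(0,1)`. -/
def unif01 : Measure ℝ := volume.restrict (Set.Ioo (0 : ℝ) 1)

/-- `hs` is a decreasing rearrangement of `h : (0,1)^k → ℝ`. -/
def IsDecRearrangement {k : ℕ} (h : (Fin k → ℝ) → ℝ) (hs : ℝ → ℝ) : Prop :=
  AntitoneOn hs (Set.Ioo (0 : ℝ) 1) ∧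
  ∀ w : ℝ,
    volume {t ∈ Set.Ioo (0 : ℝ) 1 | w ≤ hs t} =
      volume {x ∈ Set.pi Set.univ (fun _ : Fin k => Set.Ioo (0 : ℝ) 1) | w ≤ h x}

/-- Schur order `f ≺_S g` for functions on unit cubes, via decreasing rearrangements. -/
def SchurLE {d d' : ℕ} (f : (Fin d → ℝ) → ℝ) (g : (Fin d' → ℝ) → ℝ) : Prop :=
  ∃ fs gs : ℝ → ℝ, IsDecRearrangement f fs ∧ IsDecRearrangement g gs ∧
    (∀ x ∈ Set.Ioo (0 : ℝ) 1,
      (∫ t in Set.Ioo (0 : ℝ) x, fs t) ≤ ∫ t in Set.Ioo (0 : ℝ) x, gs t) ∧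
    (∫ t in Set.Ioo (0 : ℝ) 1, fs t) = ∫ t in Set.Ioo (0 : ℝ) 1, gs t

/-- `κ` is a Markov-kernel version of the conditional cdf of `Y` given `X`. -/
def IsCondCDFKernel {β : Type*} [MeasurableSpace β]
    (P : Measure Ω) (Y : Ω → ℝ) (X : Ω → β) (κ : β → ℝ → ℝ) : Prop :=
  (∀ y : ℝ, Measurable fun x => κ x y) ∧
  ∀ y : ℝ, (fun ω => κ (X ω) y) =ᵐ[P] condProbLE P Y X y

/-- The dependence measure `ξ_φ(Y, X)` (with conditional cdf kernel `κ`). -/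
def xiPhi {β : Type*} [MeasurableSpace β] (P : Measure Ω) (Y : Ω → ℝ) (X : Ω → β)
    (κ : β → ℝ → ℝ) (φ : ℝ → ℝ) : ℝ :=
  (∫ y1, ∫ y, φ ((if y1 ≤ y then (1 : ℝ) else 0) - cdfRV P Y y) ∂(P.map Y) ∂(P.map Y))⁻¹ *
    ∫ x, ∫ y, φ (κ x y - cdfRV P Y y) ∂(P.map Y) ∂(P.map X)

/-- The dependence measure `Λ_φ(Y, X)` (with conditional cdf kernel `κ`). -/
def LamPhi {β : Type*} [MeasurableSpace β] (P : Measure Ω) (Y : Ω → ℝ) (X : Ω → β)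
    (κ : β → ℝ → ℝ) (φ : ℝ → ℝ) : ℝ :=
  (∫ y12 : ℝ × ℝ, ∫ y,
      φ ((if y12.1 ≤ y then (1 : ℝ) else 0) - if y12.2 ≤ y then (1 : ℝ) else 0)
      ∂(P.map Y) ∂((P.map Y).prod (P.map Y)))⁻¹ *
    ∫ x12 : β × β, ∫ y, φ (κ x12.1 y - κ x12.2 y) ∂(P.map Y) ∂((P.map X).prod (P.map X))

/-- `φ` vanishes at `0` and is strictly convex at `0`. -/
def StrictlyConvexAtZero (φ : ℝ → ℝ) : Prop :=
  φ 0 = 0 ∧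
    ∀ s t lam : ℝ, s < 0 → 0 < t → 0 < lam → lam < 1 → lam * s + (1 - lam) * t = 0 →
      0 < lam * φ s + (1 - lam) * φ t

/-- `μ` is the (possibly degenerate) Gaussian distribution `N(m, S)` on `ℝ^d`,
characterized via its characteristic function. -/
def IsGaussianPi {d : ℕ} (μ : Measure (Fin d → ℝ)) (m : Fin d → ℝ)
    (S : Matrix (Fin d) (Fin d) ℝ) : Prop :=
  ∀ t : Fin d → ℝ,
    (∫ x, Complex.exp (Complex.I * ((∑ i, t i * x i : ℝ) : ℂ)) ∂μ) =
      Complex.exp (Complex.I * ((∑ i, t i * m i : ℝ) : ℂ) -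
        ((∑ i, ∑ j, t i * S i j * t j : ℝ) : ℂ) / 2)

/-- `Y` and `X` are comonotone. -/
def Comonotone (P : Measure Ω) (Y X : Ω → ℝ) : Prop :=
  ∃ U : Ω → ℝ, Measurable U ∧ P.map U = unif01 ∧
    P.map (fun ω => (Y ω, X ω)) =
      P.map (fun ω => (quantRV P Y (U ω), quantRV P X (U ω)))

/-- `Y` and `X` are countermonotone. -/
def Countermonotone (P : Measure Ω) (Y X : Ω → ℝ) : Prop :=
  ∃ U : Ω → ℝ, Measurable U ∧ P.map U = unif01 ∧
    P.map (fun ω => (Y ω, X ω)) =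
      P.map (fun ω => (quantRV P Y (U ω), quantRV P X (1 - U ω)))

end CCXPaper

namespace CCXPaper

section Aux

variable {Ω : Type*} [MeasurableSpace Ω] (P : Measure Ω) [IsProbabilityMeasure P]
  (Y : Ω → ℝ) (hY : Measurable Y)

lemma cdf_mono : Monotone (cdfRV P Y) := fun a b hab =>
  ENNReal.toReal_mono (measure_ne_top _ _) (measure_mono (fun ω h => le_trans h hab))

lemma cdf_nonneg (y : ℝ) : 0 ≤ cdfRV P Y y := ENNReal.toReal_nonneg

lemma cdf_le_one (y : ℝ) : cdfRV P Y y ≤ 1 := by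
  rw [cdfRV, ← ENNReal.toReal_one]
  exact ENNReal.toReal_mono ENNReal.one_ne_top (prob_le_one)

include hY in
lemma exists_cdf_lt {v : ℝ} (hv : 0 < v) : ∃ y : ℝ, cdfRV P Y y < v := by
  have hmeas : ∀ n : ℕ, MeasurableSet {ω | Y ω ≤ -(n : ℝ)} := fun n =>
    hY measurableSet_Iic
  have hanti : Antitone fun n : ℕ => {ω | Y ω ≤ -(n : ℝ)} := by
    intro a b hab ω h
    simp only [Set.mem_setOf_eq] at h ⊢
    have : (a:ℝ) ≤ b := by exact_mod_cast hab
    linarith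
  have hint : ⋂ n : ℕ, {ω | Y ω ≤ -(n : ℝ)} = ∅ := by
    ext ω
    simp only [Set.mem_iInter, Set.mem_setOf_eq, Set.mem_empty_iff_false, iff_false, not_forall]
    obtain ⟨n, hn⟩ := exists_nat_gt (-(Y ω))
    exact ⟨n, by push_neg; linarith⟩
  have htend : Tendsto (fun n : ℕ => P {ω | Y ω ≤ -(n : ℝ)}) atTop (nhds 0) := by
    have := tendsto_measure_iInter_atTop (μ := P) (fun n => (hmeas n).nullMeasurableSet) hanti
      ⟨0, measure_ne_top _ _⟩
    rwa [hint, measure_empty] at this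
  have htr : Tendsto (fun n : ℕ => cdfRV P Y (-(n : ℝ))) atTop (nhds 0) := by
    have := (ENNReal.tendsto_toReal ENNReal.zero_ne_top).comp htend
    simpa [cdfRV, Function.comp_def] using this
  have := htr.eventually (eventually_lt_nhds hv)
  obtain ⟨n, hn⟩ := this.exists
  exact ⟨-(n : ℝ), hn⟩

include hY in
lemma exists_le_cdf {v : ℝ} (hv : v < 1) : ∃ y : ℝ, v ≤ cdfRV P Y y := by
  have hmeas : ∀ n : ℕ, MeasurableSet {ω | Y ω ≤ (n : ℝ)} := fun n => hY measurableSet_Iic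
  have hmono : Monotone fun n : ℕ => {ω | Y ω ≤ (n : ℝ)} := by
    intro a b hab ω h
    simp only [Set.mem_setOf_eq] at h ⊢
    have : (a:ℝ) ≤ b := by exact_mod_cast hab
    linarith
  have huni : ⋃ n : ℕ, {ω | Y ω ≤ (n : ℝ)} = Set.univ := by
    ext ω
    simp only [Set.mem_iUnion, Set.mem_setOf_eq, Set.mem_univ, iff_true]
    obtain ⟨n, hn⟩ := exists_nat_gt (Y ω)
    exact ⟨n, hn.le⟩
  have htend : Tendsto (fun n : ℕ => P {ω | Y ω ≤ (n : ℝ)}) atTop (nhds 1) := by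
    have := tendsto_measure_iUnion_atTop (μ := P) hmono
    rwa [huni, measure_univ] at this
  have htr : Tendsto (fun n : ℕ => cdfRV P Y (n : ℝ)) atTop (nhds 1) := by
    have := (ENNReal.tendsto_toReal ENNReal.one_ne_top).comp htend
    simpa [cdfRV, Function.comp_def] using this
  have := htr.eventually (eventually_gt_nhds hv)
  obtain ⟨n, hn⟩ := this.exists
  exact ⟨(n : ℝ), hn.le⟩

include hY in
lemma bddBelow_quantSet {v : ℝ} (hv : 0 < v) : BddBelow {y : ℝ | v ≤ cdfRV P Y y} := by
  obtain ⟨y0, hy0⟩ := exists_cdf_lt P Y hY hv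
  exact ⟨y0, fun y hy => by
    by_contra h
    push_neg at h
    exact absurd (le_trans hy (cdf_mono P Y h.le)) (not_le.2 hy0)⟩

include hY in
lemma quant_le {v y : ℝ} (hv : 0 < v) (h : v ≤ cdfRV P Y y) : quantRV P Y v ≤ y :=
  csInf_le (bddBelow_quantSet P Y hY hv) h

include hY in
lemma cdf_lt_of_lt_quant {v y : ℝ} (hv : 0 < v) (h : y < quantRV P Y v) :
    cdfRV P Y y < v := by
  by_contra hc
  push_neg at hc
  exact absurd (quant_le P Y hY hv hc) (not_le.2 h)

include hY in
lemma le_cdf_quant {v : ℝ} (hv : v ∈ Set.Ioo (0:ℝ) 1) : v ≤ cdfRV P Y (quantRV P Y v) := by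
  set q := quantRV P Y v with hq
  set S := {y : ℝ | v ≤ cdfRV P Y y} with hS
  have hSne : S.Nonempty := exists_le_cdf P Y hY hv.2
  have hbdd := bddBelow_quantSet P Y hY hv.1
  -- right continuity
  have hmeas : ∀ n : ℕ, MeasurableSet {ω | Y ω ≤ q + 1/(n+1 : ℝ)} := fun n => hY measurableSet_Iic
  have hanti : Antitone fun n : ℕ => {ω | Y ω ≤ q + 1/(n+1 : ℝ)} := by
    intro a b hab ω h
    simp only [Set.mem_setOf_eq] at h ⊢
    have hab' : (a:ℝ) ≤ b := by exact_mod_cast hab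
    have : 1/(b+1:ℝ) ≤ 1/(a+1:ℝ) := by
      apply one_div_le_one_div_of_le <;> linarith
    linarith
  have hint : ⋂ n : ℕ, {ω | Y ω ≤ q + 1/(n+1 : ℝ)} = {ω | Y ω ≤ q} := by
    ext ω
    simp only [Set.mem_iInter, Set.mem_setOf_eq]
    constructor
    · intro h
      by_contra hc
      push_neg at hc
      obtain ⟨n, hn⟩ := exists_nat_one_div_lt (sub_pos.2 hc)
      have := h n
      linarith [hn]
    · intro h n
      have : (0:ℝ) < 1/(n+1 : ℝ) := by positivity
      linarith
  have htend : Tendsto (fun n : ℕ => P {ω | Y ω ≤ q + 1/(n+1 : ℝ)}) atTop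
      (nhds (P {ω | Y ω ≤ q})) := by
    have := tendsto_measure_iInter_atTop (μ := P) (fun n => (hmeas n).nullMeasurableSet) hanti
      ⟨0, measure_ne_top _ _⟩
    rwa [hint] at this
  have htr : Tendsto (fun n : ℕ => cdfRV P Y (q + 1/(n+1 : ℝ))) atTop
      (nhds (cdfRV P Y q)) :=
    (ENNReal.tendsto_toReal (measure_ne_top _ _)).comp htend
  refine ge_of_tendsto' htr (fun n => ?_)
  -- v ≤ F(q + 1/(n+1)) : there is y ∈ S with y < q + 1/(n+1)
  have hlt : q < q + 1/(n+1 : ℝ) := by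
    have : (0:ℝ) < 1/(n+1 : ℝ) := by positivity
    linarith
  obtain ⟨y, hyS, hy⟩ := exists_lt_of_csInf_lt hSne (show sInf S < q + 1/(n+1:ℝ) from hlt)
  exact le_trans hyS (cdf_mono P Y hy.le)


include hY in
lemma lt_quant_of_cdf_lt {v z : ℝ} (hv : v ∈ Set.Ioo (0:ℝ) 1) (h : cdfRV P Y z < v) :
    z < quantRV P Y v := by
  by_contra hc
  push_neg at hc
  have h1 := le_cdf_quant P Y hY hv
  have h2 := cdf_mono P Y hc
  linarith

include hY in
lemma measure_lt_quant_toReal {v : ℝ} (hv : v ∈ Set.Ioo (0:ℝ) 1) :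
    (P {ω | Y ω < quantRV P Y v}).toReal
      = sSup (Set.range (cdfRV P Y) ∩ Set.Iio v) := by
  set q := quantRV P Y v with hq
  set T := Set.range (cdfRV P Y) ∩ Set.Iio v with hT
  have hTne : T.Nonempty := by
    obtain ⟨y, hy⟩ := exists_cdf_lt P Y hY hv.1
    exact ⟨cdfRV P Y y, ⟨y, rfl⟩, hy⟩
  have hTbdd : BddAbove T := ⟨v, fun a ha => ha.2.le⟩
  have hmono : Monotone fun n : ℕ => {ω | Y ω ≤ q - 1/(n+1 : ℝ)} := by
    intro a b hab ω h
    simp only [Set.mem_setOf_eq] at h ⊢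
    have hab' : (a:ℝ) ≤ b := by exact_mod_cast hab
    have : 1/(b+1:ℝ) ≤ 1/(a+1:ℝ) := by
      apply one_div_le_one_div_of_le <;> linarith
    linarith
  have huni : ⋃ n : ℕ, {ω | Y ω ≤ q - 1/(n+1 : ℝ)} = {ω | Y ω < q} := by
    ext ω
    simp only [Set.mem_iUnion, Set.mem_setOf_eq]
    constructor
    · rintro ⟨n, hn⟩
      have : (0:ℝ) < 1/(n+1 : ℝ) := by positivity
      linarith
    · intro h
      obtain ⟨n, hn⟩ := exists_nat_one_div_lt (sub_pos.2 h)
      exact ⟨n, by linarith⟩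
  have htend : Tendsto (fun n : ℕ => P {ω | Y ω ≤ q - 1/(n+1 : ℝ)}) atTop
      (nhds (P {ω | Y ω < q})) := by
    have := tendsto_measure_iUnion_atTop (μ := P) hmono
    rwa [huni] at this
  have htr : Tendsto (fun n : ℕ => cdfRV P Y (q - 1/(n+1 : ℝ))) atTop
      (nhds ((P {ω | Y ω < q}).toReal)) :=
    (ENNReal.tendsto_toReal (measure_ne_top _ _)).comp htend
  have hmem : ∀ n : ℕ, cdfRV P Y (q - 1/(n+1 : ℝ)) ∈ T := by
    intro n
    refine ⟨⟨_, rfl⟩, ?_⟩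
    apply cdf_lt_of_lt_quant P Y hY hv.1
    have : (0:ℝ) < 1/(n+1 : ℝ) := by positivity
    rw [← hq]; linarith
  apply le_antisymm
  · exact le_of_tendsto htr (Filter.Eventually.of_forall fun n => le_csSup hTbdd (hmem n))
  · refine csSup_le hTne ?_
    rintro a ⟨⟨z, rfl⟩, haz⟩
    have hz : z < q := lt_quant_of_cdf_lt P Y hY hv haz
    refine ENNReal.toReal_mono (measure_ne_top _ _) (measure_mono ?_)
    intro ω h
    simp only [Set.mem_setOf_eq] at h ⊢
    linarith

lemma sSup_closure_inter_Iio {s : Set ℝ} {v : ℝ} (hne : (s ∩ Set.Iio v).Nonempty) :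
    sSup (closure s ∩ Set.Iio v) = sSup (s ∩ Set.Iio v) := by
  have hsub : s ∩ Set.Iio v ⊆ closure s ∩ Set.Iio v :=
    Set.inter_subset_inter_left _ subset_closure
  apply le_antisymm
  · refine csSup_le (hne.mono hsub) ?_
    rintro a ⟨hac, hav⟩
    refine le_of_forall_pos_le_add ?_
    intro ε hε
    have hε' : 0 < min ε (v - a) := lt_min hε (by simpa using hav)
    obtain ⟨b, hbs, hdist⟩ := Metric.mem_closure_iff.mp hac _ hε'
    rw [Real.dist_eq, abs_lt] at hdist
    have hb1 : b < v := by
      have := hdist.1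
      have h2 : min ε (v - a) ≤ v - a := min_le_right _ _
      linarith
    have hble : b ≤ sSup (s ∩ Set.Iio v) := le_csSup ⟨v, fun x hx => hx.2.le⟩ ⟨hbs, hb1⟩
    have := hdist.2
    have h3 : min ε (v - a) ≤ ε := min_le_left _ _
    linarith
  · exact csSup_le_csSup ⟨v, fun a ha => ha.2.le⟩ hne hsub

include hY in
lemma measure_quant_le_toReal {v : ℝ} (hv : v ∈ Set.Ioo (0:ℝ) 1) :
    (P {ω | quantRV P Y v ≤ Y ω}).toReal
      = 1 - sSup (closure (Set.range (cdfRV P Y)) ∩ Set.Iio v) := by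
  have hne : (Set.range (cdfRV P Y) ∩ Set.Iio v).Nonempty := by
    obtain ⟨y, hy⟩ := exists_cdf_lt P Y hY hv.1
    exact ⟨cdfRV P Y y, ⟨y, rfl⟩, hy⟩
  rw [sSup_closure_inter_Iio hne, ← measure_lt_quant_toReal P Y hY hv]
  set q := quantRV P Y v
  have hcompl : {ω | q ≤ Y ω} = {ω | Y ω < q}ᶜ := by
    ext ω; simp [not_lt]
  have hms : MeasurableSet {ω | Y ω < q} := hY measurableSet_Iio
  have hadd := measure_add_measure_compl (μ := P) hms
  rw [measure_univ] at hadd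
  have := ENNReal.toReal_add (measure_ne_top P {ω | Y ω < q})
    (measure_ne_top P {ω | Y ω < q}ᶜ)
  rw [hadd, ENNReal.toReal_one] at this
  rw [hcompl]
  linarith


section CondProb

variable {β : Type*} [MeasurableSpace β] {X : Ω → β} (hX : Measurable X)
  {s t : Set Ω}

lemma indicator_integrable (hs : MeasurableSet s) :
    Integrable (s.indicator (fun _ => (1:ℝ))) P :=
  (integrable_const (1:ℝ)).indicator hs

include hX in
lemma condProb_nonneg : 0 ≤ᵐ[P] condProb P X s :=
  condExp_nonneg (Filter.Eventually.of_forall fun ω => Set.indicator_nonneg (fun _ _ => zero_le_one) ω)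

include hX in
lemma condProb_le_one (hs : MeasurableSet s) : condProb P X s ≤ᵐ[P] fun _ => (1:ℝ) := by
  have hm : MeasurableSpace.comap X inferInstance ≤ _ := hX.comap_le
  have h := condExp_mono (m := MeasurableSpace.comap X inferInstance) (μ := P)
    (indicator_integrable P hs) (integrable_const (1:ℝ))
    (Filter.Eventually.of_forall fun ω => Set.indicator_le_self' (fun _ _ => zero_le_one) ω)
  rw [condExp_const hm] at h
  exact h

include hX in
lemma integral_condProb (hs : MeasurableSet s) :
    ∫ ω, condProb P X s ω ∂P = (P s).toReal := by
  have hm : MeasurableSpace.comap X inferInstance ≤ _ := hX.comap_le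
  rw [condProb, integral_condExp hm]
  rw [integral_indicator_const (1:ℝ) hs, smul_eq_mul, mul_one, measureReal_def]

include hX in
lemma integrable_condProb : Integrable (condProb P X s) P := integrable_condExp

include hX in
lemma condProb_ae_eq_indicator (hst : s =ᵐ[P] t)
    (ht : MeasurableSet[MeasurableSpace.comap X inferInstance] t) :
    condProb P X s =ᵐ[P] t.indicator (fun _ => (1:ℝ)) := by
  have hm : MeasurableSpace.comap X inferInstance ≤ _ := hX.comap_le
  have hind : s.indicator (fun _ => (1:ℝ)) =ᵐ[P] t.indicator (fun _ => (1:ℝ)) := by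
    filter_upwards [Filter.eventuallyEq_set.mp hst] with ω hω
    by_cases h : ω ∈ s
    · rw [Set.indicator_of_mem h, Set.indicator_of_mem (hω.mp h)]
    · rw [Set.indicator_of_notMem h, Set.indicator_of_notMem (fun h' => h (hω.mpr h'))]
  refine (condExp_congr_ae hind).trans ?_
  rw [condExp_of_stronglyMeasurable hm
    ((stronglyMeasurable_const (β := ℝ)).indicator ht)
    (indicator_integrable P (hm _ ht))]

include hX in
lemma setIntegral_condProb (hs : MeasurableSet s)
    (ht : MeasurableSet[MeasurableSpace.comap X inferInstance] t) :
    ∫ ω in t, condProb P X s ω ∂P = (P (s ∩ t)).toReal := by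
  have hm : MeasurableSpace.comap X inferInstance ≤ _ := hX.comap_le
  rw [condProb, setIntegral_condExp hm (indicator_integrable P hs) ht]
  rw [integral_indicator hs, setIntegral_const, smul_eq_mul, mul_one,
    measureReal_def, Measure.restrict_apply hs]

end CondProb

section Bernoulli

lemma convexOn_bound {φ : ℝ → ℝ} (hφ : ConvexOn ℝ Set.univ φ) {z : ℝ}
    (h : z ∈ Set.Icc (0:ℝ) 1) : φ z ≤ (1 - z) * φ 0 + z * φ 1 := by
  have := hφ.2 (Set.mem_univ (0:ℝ)) (Set.mem_univ (1:ℝ))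
    (sub_nonneg.2 h.2) h.1 (by ring)
  simpa using this

lemma abs_comp_le {φ : ℝ → ℝ} (hφ : ConvexOn ℝ Set.univ φ) {z : ℝ}
    (h : z ∈ Set.Icc (0:ℝ) 1) :
    |φ z| ≤ |φ 0| + |φ 1| + 2 * |φ (1/2)| := by
  have h1 : φ z ≤ (1 - z) * φ 0 + z * φ 1 := convexOn_bound hφ h
  have h1' : φ (1 - z) ≤ (1 - (1-z)) * φ 0 + (1-z) * φ 1 := by
    have := convexOn_bound hφ (⟨sub_nonneg.2 h.2, by linarith [h.1]⟩ : (1-z) ∈ Set.Icc (0:ℝ) 1)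
    linarith [this]
  have hmid : φ (1/2) ≤ (1/2) * φ z + (1/2) * φ (1 - z) := by
    have := hφ.2 (Set.mem_univ z) (Set.mem_univ (1 - z))
      (by norm_num : (0:ℝ) ≤ 1/2) (by norm_num : (0:ℝ) ≤ 1/2) (by norm_num)
    have harg : (1/2 : ℝ) • z + (1/2 : ℝ) • (1 - z) = 1/2 := by
      simp only [smul_eq_mul]; ring
    rw [harg] at this
    simpa using this
  have hM : (1 - z) * φ 0 + z * φ 1 ≤ |φ 0| + |φ 1| := by
    have h0 : (1-z) * φ 0 ≤ |φ 0| := by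
      calc (1-z) * φ 0 ≤ (1-z) * |φ 0| := by
            apply mul_le_mul_of_nonneg_left (le_abs_self _) (by linarith [h.2])
        _ ≤ 1 * |φ 0| := by
            apply mul_le_mul_of_nonneg_right (by linarith [h.1]) (abs_nonneg _)
        _ = |φ 0| := one_mul _
    have h1'' : z * φ 1 ≤ |φ 1| := by
      calc z * φ 1 ≤ z * |φ 1| := mul_le_mul_of_nonneg_left (le_abs_self _) h.1
        _ ≤ 1 * |φ 1| := mul_le_mul_of_nonneg_right h.2 (abs_nonneg _)
        _ = |φ 1| := one_mul _
    linarith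
  have hM' : (1 - (1-z)) * φ 0 + (1-z) * φ 1 ≤ |φ 0| + |φ 1| := by
    have h0 : (1-(1-z)) * φ 0 ≤ |φ 0| := by
      have hz1 : 1 - (1-z) = z := by ring
      rw [hz1]
      calc z * φ 0 ≤ z * |φ 0| := mul_le_mul_of_nonneg_left (le_abs_self _) h.1
        _ ≤ 1 * |φ 0| := mul_le_mul_of_nonneg_right h.2 (abs_nonneg _)
        _ = |φ 0| := one_mul _
    have h1'' : (1-z) * φ 1 ≤ |φ 1| := by
      calc (1-z) * φ 1 ≤ (1-z) * |φ 1| :=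
            mul_le_mul_of_nonneg_left (le_abs_self _) (by linarith [h.2])
        _ ≤ 1 * |φ 1| := mul_le_mul_of_nonneg_right (by linarith [h.1]) (abs_nonneg _)
        _ = |φ 1| := one_mul _
    linarith
  rw [abs_le]
  constructor
  · -- lower bound : φ z ≥ 2 φ(1/2) - φ(1-z)
    have hlow : 2 * φ (1/2) - φ (1 - z) ≤ φ z := by linarith
    have : -(2 * |φ (1/2)|) ≤ 2 * φ (1/2) := by
      have := neg_abs_le (φ (1/2)); linarith
    have h2 : φ (1-z) ≤ |φ 0| + |φ 1| := le_trans h1' hM'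
    linarith
  · exact le_trans h1 (le_trans hM (by linarith [abs_nonneg (φ (1/2))]))

lemma integral_convex_comp_le {φ : ℝ → ℝ} (hφ : ConvexOn ℝ Set.univ φ)
    {Z : Ω → ℝ} (P : Measure Ω) [IsProbabilityMeasure P]
    (hZm : AEStronglyMeasurable Z P) (h01 : ∀ᵐ ω ∂P, Z ω ∈ Set.Icc (0:ℝ) 1)
    (hZint : Integrable Z P) :
    ∫ ω, φ (Z ω) ∂P ≤ (1 - ∫ ω, Z ω ∂P) * φ 0 + (∫ ω, Z ω ∂P) * φ 1 := by
  have hφc : Continuous φ := by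
    rw [← continuousOn_univ]
    exact hφ.continuousOn isOpen_univ
  have hmeas : AEStronglyMeasurable (fun ω => φ (Z ω)) P :=
    hφc.comp_aestronglyMeasurable hZm
  have hint : Integrable (fun ω => φ (Z ω)) P := by
    refine Integrable.mono' (integrable_const (|φ 0| + |φ 1| + 2 * |φ (1/2)|)) hmeas ?_
    filter_upwards [h01] with ω hω
    exact abs_comp_le hφ hω
  have hle : (fun ω => φ (Z ω)) ≤ᵐ[P] fun ω => (1 - Z ω) * φ 0 + Z ω * φ 1 := by
    filter_upwards [h01] with ω hω
    exact convexOn_bound hφ hω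
  have i1 : Integrable (fun ω => (1 - Z ω) * φ 0) P := by
    have := ((integrable_const (1:ℝ)).sub hZint).mul_const (φ 0)
    simpa using this
  have i2 : Integrable (fun ω => Z ω * φ 1) P := hZint.mul_const _
  have hint2 : Integrable (fun ω => (1 - Z ω) * φ 0 + Z ω * φ 1) P := i1.add i2
  calc ∫ ω, φ (Z ω) ∂P ≤ ∫ ω, ((1 - Z ω) * φ 0 + Z ω * φ 1) ∂P :=
        integral_mono_ae hint hint2 hle
    _ = (1 - ∫ ω, Z ω ∂P) * φ 0 + (∫ ω, Z ω ∂P) * φ 1 := by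
        rw [integral_add i1 i2, integral_mul_const, integral_mul_const,
          integral_sub (integrable_const (1:ℝ)) hZint, integral_const]
        simp

end Bernoulli


section Dichotomy

variable {β : Type*} [MeasurableSpace β] {X : Ω → β} (hX : Measurable X) {s : Set Ω}

lemma integral_comp_indicator (hs : MeasurableSet s) (φ : ℝ → ℝ) :
    ∫ ω, φ (s.indicator (fun _ => (1:ℝ)) ω) ∂P
      = (1 - (P s).toReal) * φ 0 + (P s).toReal * φ 1 := by
  have hfun : (fun ω => φ (s.indicator (fun _ => (1:ℝ)) ω))
      = fun ω => s.indicator (fun _ => φ 1 - φ 0) ω + φ 0 := by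
    funext ω
    by_cases h : ω ∈ s
    · rw [Set.indicator_of_mem h, Set.indicator_of_mem h]; ring
    · rw [Set.indicator_of_notMem h, Set.indicator_of_notMem h]; ring
  rw [hfun, integral_add ((integrable_const _).indicator hs) (integrable_const _),
    integral_indicator_const _ hs, integral_const]
  simp only [smul_eq_mul, measureReal_def, measure_univ, ENNReal.toReal_one, one_mul, one_smul]
  ring

include hX in
lemma condProb_dichotomy (hs : MeasurableSet s)
    (hcx : ∀ φ : ℝ → ℝ, ConvexOn ℝ Set.univ φ →
      ∫ ω, φ (s.indicator (fun _ => (1:ℝ)) ω) ∂P ≤ ∫ ω, φ (condProb P X s ω) ∂P) :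
    s.indicator (fun _ => (1:ℝ)) =ᵐ[P] condProb P X s := by
  have hm : MeasurableSpace.comap X inferInstance ≤ _ := hX.comap_le
  set Z := condProb P X s with hZ
  set m := (P s).toReal with hmdef
  have hZ01 : ∀ᵐ ω ∂P, Z ω ∈ Set.Icc (0:ℝ) 1 := by
    filter_upwards [condProb_nonneg P hX, condProb_le_one P hX hs] with ω h1 h2
    exact ⟨h1, h2⟩
  have hZint : Integrable Z P := integrable_condProb P hX
  have hZmean : ∫ ω, Z ω ∂P = m := integral_condProb P hX hs
  -- square
  have hsq : ConvexOn ℝ Set.univ fun x : ℝ => x ^ 2 := Even.convexOn_pow even_two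
  have hZ2int : Integrable (fun ω => Z ω ^ 2) P := by
    refine Integrable.mono' (integrable_const (1:ℝ)) ?_ ?_
    · exact (hZint.aestronglyMeasurable.aemeasurable.pow_const 2).aestronglyMeasurable
    · filter_upwards [hZ01] with ω hω
      rw [Real.norm_eq_abs, abs_of_nonneg (by positivity)]
      calc Z ω ^ 2 ≤ 1 ^ 2 := by
            apply pow_le_pow_left₀ hω.1 hω.2
        _ = 1 := one_pow 2
  have h1 := hcx (fun x => x ^ 2) hsq
  rw [show (∫ ω, (fun x : ℝ => x ^ 2) (s.indicator (fun _ => (1:ℝ)) ω) ∂P)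
      = (1 - (P s).toReal) * (fun x : ℝ => x ^ 2) 0 + (P s).toReal * (fun x : ℝ => x ^ 2) 1
    from integral_comp_indicator P hs (fun x => x ^ 2)] at h1
  simp only at h1
  have h1' : m ≤ ∫ ω, Z ω ^ 2 ∂P := by
    calc m = (1 - m) * (0:ℝ)^2 + m * (1:ℝ)^2 := by ring
      _ ≤ ∫ ω, Z ω ^ 2 ∂P := h1
  have h2 : ∫ ω, Z ω ^ 2 ∂P ≤ ∫ ω, Z ω ∂P := by
    refine integral_mono_ae hZ2int hZint ?_
    filter_upwards [hZ01] with ω hω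
    calc Z ω ^ 2 = Z ω * Z ω := sq (Z ω)
      _ ≤ 1 * Z ω := mul_le_mul_of_nonneg_right hω.2 hω.1
      _ = Z ω := one_mul _
  have heq : ∫ ω, (Z ω - Z ω ^ 2) ∂P = 0 := by
    rw [integral_sub hZint hZ2int]
    linarith [hZmean]
  have hdich : ∀ᵐ ω ∂P, Z ω = 0 ∨ Z ω = 1 := by
    have hnn : 0 ≤ᵐ[P] (fun ω => Z ω - Z ω ^ 2) := by
      filter_upwards [hZ01] with ω hω
      have : Z ω * Z ω ≤ 1 * Z ω := mul_le_mul_of_nonneg_right hω.2 hω.1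
      simp only [Pi.zero_apply]
      nlinarith [hω.1, hω.2]
    have h0 : (fun ω => Z ω - Z ω ^ 2) =ᵐ[P] 0 :=
      (integral_eq_zero_iff_of_nonneg_ae hnn (hZint.sub hZ2int)).mp heq
    filter_upwards [h0] with ω hω
    simp only [Pi.zero_apply] at hω
    have : Z ω * (1 - Z ω) = 0 := by nlinarith [hω]
    rcases mul_eq_zero.mp this with h | h
    · exact Or.inl h
    · exact Or.inr (by linarith)
  -- t := {Z = 1}
  set t := Z ⁻¹' {1} with ht
  have htm : MeasurableSet[MeasurableSpace.comap X inferInstance] t :=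
    (stronglyMeasurable_condExp (m := MeasurableSpace.comap X inferInstance)).measurable
      (measurableSet_singleton (1:ℝ))
  have hZind : Z =ᵐ[P] t.indicator (fun _ => (1:ℝ)) := by
    filter_upwards [hdich] with ω hω
    rcases hω with h | h
    · rw [Set.indicator_of_notMem (by simp [ht, Set.mem_preimage, h]), h]
    · rw [Set.indicator_of_mem (by simp [ht, Set.mem_preimage, h]), h]
  -- ∫ over t and tᶜ
  have hst1 : (P (s ∩ t)).toReal = (P t).toReal := by
    rw [← setIntegral_condProb P hX hs htm]
    calc ∫ ω in t, Z ω ∂P = ∫ ω in t, (1:ℝ) ∂P := by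
          refine setIntegral_congr_ae (hm _ htm) ?_
          filter_upwards [hZind] with ω hω hωt
          rw [hω, Set.indicator_of_mem hωt]
      _ = (P t).toReal := by rw [setIntegral_const, smul_eq_mul, mul_one, measureReal_def]
  have hst2 : (P (s ∩ tᶜ)).toReal = 0 := by
    rw [← setIntegral_condProb P hX hs htm.compl]
    calc ∫ ω in tᶜ, Z ω ∂P = ∫ ω in tᶜ, (0:ℝ) ∂P := by
          refine setIntegral_congr_ae (hm _ htm.compl) ?_
          filter_upwards [hZind] with ω hω hωt
          rw [hω, Set.indicator_of_notMem hωt]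
      _ = 0 := by simp
  have hPst : P (s ∩ tᶜ) = 0 := by
    have := measure_ne_top P (s ∩ tᶜ)
    exact (ENNReal.toReal_eq_zero_iff _).mp hst2 |>.resolve_right this
  have hPts : P (t \ s) = 0 := by
    have hsub : s ∩ t ⊆ t := Set.inter_subset_right
    have hdiff : P (t \ (s ∩ t)) = P t - P (s ∩ t) :=
      measure_diff hsub ((hs.inter (hm _ htm)).nullMeasurableSet) (measure_ne_top _ _)
    have heq2 : P (s ∩ t) = P t :=
      (ENNReal.toReal_eq_toReal_iff' (measure_ne_top _ _) (measure_ne_top _ _)).mp hst1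
    have : t \ s = t \ (s ∩ t) := by
      ext ω; simp only [Set.mem_diff, Set.mem_inter_iff]; tauto
    rw [this, hdiff, heq2, tsub_self]
  have hae : ∀ᵐ ω ∂P, (ω ∈ s ↔ ω ∈ t) := by
    have h1 : ∀ᵐ ω ∂P, ω ∉ s ∩ tᶜ := (measure_eq_zero_iff_ae_notMem).mp hPst
    have h2 : ∀ᵐ ω ∂P, ω ∉ t \ s := (measure_eq_zero_iff_ae_notMem).mp hPts
    filter_upwards [h1, h2] with ω hω1 hω2
    constructor
    · intro hωs
      by_contra hωt
      exact hω1 ⟨hωs, hωt⟩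
    · intro hωt
      by_contra hωs
      exact hω2 ⟨hωt, hωs⟩
  refine Filter.EventuallyEq.trans ?_ hZind.symm
  filter_upwards [hae] with ω hω
  by_cases h : ω ∈ s
  · rw [Set.indicator_of_mem h, Set.indicator_of_mem (hω.mp h)]
  · rw [Set.indicator_of_notMem h, Set.indicator_of_notMem (fun h' => h (hω.mpr h'))]

end Dichotomy


section NullFlat

include hY in
lemma measure_flat_null (y' : ℝ) :
    P {ω | y' < Y ω ∧ cdfRV P Y (Y ω) = cdfRV P Y y'} = 0 := by
  set μ := P.map Y with hμ
  have hIic : ∀ y : ℝ, μ (Set.Iic y) = P {ω | Y ω ≤ y} := fun y => by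
    rw [hμ, Measure.map_apply hY measurableSet_Iic]; rfl
  set S := {y : ℝ | y' < y ∧ μ (Set.Ioc y' y) = 0} with hS
  have hμfin : ∀ s : Set ℝ, μ s ≠ ⊤ := by
    intro s
    have : IsProbabilityMeasure μ := Measure.isProbabilityMeasure_map hY.aemeasurable
    exact measure_ne_top μ s
  have hsub : {ω | y' < Y ω ∧ cdfRV P Y (Y ω) = cdfRV P Y y'} ⊆ Y ⁻¹' S := by
    intro ω ⟨h1, h2⟩
    refine ⟨h1, ?_⟩
    have hsplit : μ (Set.Iic (Y ω)) = μ (Set.Iic y') + μ (Set.Ioc y' (Y ω)) := by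
      rw [← measure_union (Set.Iic_disjoint_Ioc le_rfl) measurableSet_Ioc,
        Set.Iic_union_Ioc_eq_Iic h1.le]
    have hFeq : μ (Set.Iic (Y ω)) = μ (Set.Iic y') := by
      rw [hIic, hIic]
      exact (ENNReal.toReal_eq_toReal_iff' (measure_ne_top _ _) (measure_ne_top _ _)).mp h2
    rw [hFeq] at hsplit
    have : μ (Set.Iic y') + 0 = μ (Set.Iic y') + μ (Set.Ioc y' (Y ω)) := by
      rw [add_zero]; exact hsplit
    exact (ENNReal.add_right_inj (hμfin _)).mp this |>.symm
  refine le_antisymm ?_ zero_le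
  refine le_trans (measure_mono hsub) ?_
  refine le_trans (Measure.le_map_apply hY.aemeasurable S) ?_
  -- μ S = 0
  set U := ⋃ (q : ℚ) (_ : (q : ℝ) ∈ S), Set.Ioc y' (q : ℝ) with hU
  have hUnull : μ U = 0 := by
    refine measure_iUnion_null fun q => measure_iUnion_null fun hq => hq.2
  have hkey : ∀ a b : ℝ, a ∈ S \ U → b ∈ S → a < b → False := by
    intro a b ha hb hab
    obtain ⟨q, hq1, hq2⟩ := exists_rat_btwn hab
    have hqS : (q : ℝ) ∈ S := by
      refine ⟨lt_trans ha.1.1 hq1, ?_⟩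
      refine le_antisymm ?_ zero_le
      rw [← hb.2]
      exact measure_mono (Set.Ioc_subset_Ioc le_rfl hq2.le)
    exact ha.2 (Set.mem_iUnion.2 ⟨q, Set.mem_iUnion.2 ⟨hqS, ⟨ha.1.1, hq1.le⟩⟩⟩)
  have hdiff : μ (S \ U) = 0 := by
    rcases Set.eq_empty_or_nonempty (S \ U) with h | ⟨y1, hy1⟩
    · rw [h, measure_empty]
    · have hsub1 : S \ U ⊆ {y1} := by
        intro y2 hy2
        rcases lt_trichotomy y2 y1 with h | h | h
        · exact absurd (hkey y2 y1 hy2 hy1.1 h) not_false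
        · exact h
        · exact absurd (hkey y1 y2 hy1 hy2.1 h) not_false
      refine le_antisymm (le_trans (measure_mono hsub1) ?_) zero_le
      have : ({y1} : Set ℝ) ⊆ Set.Ioc y' y1 := by
        intro z hz
        rw [Set.mem_singleton_iff] at hz
        subst hz
        exact ⟨hy1.1.1, le_rfl⟩
      exact le_trans (measure_mono this) (le_of_eq hy1.1.2)
  calc μ S ≤ μ (U ∪ (S \ U)) := measure_mono (fun y hy => by
        by_cases h : y ∈ U
        · exact Or.inl h
        · exact Or.inr ⟨hy, h⟩)
    _ ≤ μ U + μ (S \ U) := measure_union_le _ _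
    _ = 0 := by rw [hUnull, hdiff, add_zero]

end NullFlat

section ForwardAssembly

variable {p : ℕ} {X : Ω → Fin p → ℝ}

include hY in
lemma perfectDep_of_sets (hX : Measurable X)
    (hsets : ∀ v ∈ Set.Ioo (0:ℝ) 1, ∃ C : Set (Fin p → ℝ), MeasurableSet C ∧
      {ω | quantRV P Y v ≤ Y ω} =ᵐ[P] X ⁻¹' C) :
    ∃ f : (Fin p → ℝ) → ℝ, Measurable f ∧ Y =ᵐ[P] fun ω => f (X ω) := by
  classical
  set vfun : ℚ → ℝ := fun r => if (r:ℝ) ∈ Set.Ioo (0:ℝ) 1 then (r:ℝ) else 1/2 with hvfun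
  have hvmem : ∀ r : ℚ, vfun r ∈ Set.Ioo (0:ℝ) 1 := by
    intro r
    simp only [hvfun]
    split_ifs with h
    · exact h
    · norm_num
  have hvrat : ∀ r : ℚ, (r:ℝ) ∈ Set.Ioo (0:ℝ) 1 → vfun r = (r:ℝ) := by
    intro r h
    simp only [hvfun, if_pos h]
  choose C hCmeas hCae using fun r : ℚ => hsets (vfun r) (hvmem r)
  set g : (Fin p → ℝ) → EReal := fun x =>
    ⨆ r : ℚ, (if x ∈ C r then ((quantRV P Y (vfun r) : ℝ) : EReal) else ⊥) with hg
  have hgm : Measurable g := by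
    refine Measurable.iSup fun r => Measurable.ite (hCmeas r) measurable_const measurable_const
  refine ⟨fun x => (g x).toReal, measurable_ereal_toReal.comp hgm, ?_⟩
  have hE1 : ∀ᵐ ω ∂P, ∀ r : ℚ, (X ω ∈ C r ↔ quantRV P Y (vfun r) ≤ Y ω) := by
    rw [ae_all_iff]
    intro r
    filter_upwards [Filter.eventuallyEq_set.mp (hCae r)] with ω hω
    exact ⟨fun h => hω.mpr h, fun h => hω.mp h⟩
  have hE2 : ∀ᵐ ω ∂P, ∀ y' : ℚ,
      ¬((y':ℝ) < Y ω ∧ cdfRV P Y (Y ω) = cdfRV P Y (y':ℝ)) := by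
    rw [ae_all_iff]
    intro y'
    exact measure_eq_zero_iff_ae_notMem.mp (measure_flat_null P Y hY (y':ℝ))
  filter_upwards [hE1, hE2] with ω h1 h2
  suffices hsup : g (X ω) = ((Y ω : ℝ) : EReal) by
    simp [hsup]
  have hle : g (X ω) ≤ ((Y ω : ℝ) : EReal) := by
    refine iSup_le fun r => ?_
    by_cases h : X ω ∈ C r
    · rw [if_pos h]
      exact EReal.coe_le_coe_iff.mpr ((h1 r).mp h)
    · rw [if_neg h]; exact bot_le
  refine le_antisymm hle ?_
  by_contra hc
  push_neg at hc
  obtain ⟨y0, hy01, hy02⟩ := EReal.exists_between_coe_real hc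
  have hy02' : y0 < Y ω := EReal.coe_lt_coe_iff.mp hy02
  obtain ⟨y', hy'1, hy'2⟩ := exists_rat_btwn hy02'
  have hy'Y : (y':ℝ) < Y ω := hy'2
  -- from h2: F y' < F (Y ω)
  have hFlt : cdfRV P Y (y':ℝ) < cdfRV P Y (Y ω) := by
    have hne := h2 y'
    have hle2 : cdfRV P Y (y':ℝ) ≤ cdfRV P Y (Y ω) := cdf_mono P Y hy'Y.le
    rcases lt_or_eq_of_le hle2 with h | h
    · exact h
    · exact absurd ⟨hy'Y, h.symm⟩ hne
  obtain ⟨w, hw1, hw2⟩ := exists_rat_btwn hFlt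
  have hwIoo : (w:ℝ) ∈ Set.Ioo (0:ℝ) 1 :=
    ⟨lt_of_le_of_lt (cdf_nonneg P Y _) hw1, lt_of_lt_of_le hw2 (cdf_le_one P Y _)⟩
  have hvw : vfun w = (w:ℝ) := hvrat w hwIoo
  have hqle : quantRV P Y (vfun w) ≤ Y ω := by
    rw [hvw]
    exact quant_le P Y hY hwIoo.1 hw2.le
  have hmemC : X ω ∈ C w := (h1 w).mpr hqle
  have hy'q : (y':ℝ) ≤ quantRV P Y (vfun w) := by
    rw [hvw]
    refine le_csInf ⟨Y ω, hw2.le⟩ ?_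
    intro y hy
    by_contra hcc
    push_neg at hcc
    have := cdf_mono P Y hcc.le
    simp only [Set.mem_setOf_eq] at hy
    linarith
  have : ((y':ℝ) : EReal) ≤ g (X ω) := by
    refine le_trans ?_ (le_iSup _ w)
    rw [if_pos hmemC]
    exact EReal.coe_le_coe_iff.mpr hy'q
  have hcontr : ((y':ℝ) : EReal) < ((y':ℝ) : EReal) :=
    lt_of_le_of_lt this (lt_trans hy01 (EReal.coe_lt_coe_iff.mpr hy'1))
  exact lt_irrefl _ hcontr

end ForwardAssembly



end Aux

end CCXPaper

open CCXPaper in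
/-- `(Y, X)` is globally maximal in the conditional convex order on the
class `R_A` if and only if `Y` is perfectly dependent on `X`, i.e. `Y = f(X)` a.s.
for some measurable `f`. -/
theorem ccx_global_max_iff_perfect_dep
    {Ω : Type*} [MeasurableSpace Ω] (P : Measure Ω) [IsProbabilityMeasure P]
    (hPna : Nonatomic P)
    {A : Set ℝ} (hA : IsClosed A) (hA1 : A ⊆ Set.Icc (0 : ℝ) 1)
    {p : ℕ} (Y : Ω → ℝ) (X : Ω → Fin p → ℝ)
    (hY : Measurable Y) (hX : Measurable X)
    (hYA : closure (Set.range (cdfRV P Y)) = A) :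
    (∀ (p' : ℕ) (Y' : Ω → ℝ) (X' : Ω → Fin p' → ℝ),
        Measurable Y' → Measurable X' →
        closure (Set.range (cdfRV P Y')) = A →
        CCX P Y' X' P Y X) ↔
      PerfectDep P Y X := by
  constructor
  · intro hmax
    refine perfectDep_of_sets P Y hY hX ?_
    intro v hv
    set X2 : Ω → Fin 1 → ℝ := fun ω _ => Y ω with hX2def
    have hX2 : Measurable X2 := measurable_pi_lambda _ fun _ => hY
    have hcx := hmax 1 Y X2 hY hX2 hYA v hv
    set q := quantRV P Y v with hq
    set s := {ω | q ≤ Y ω} with hsdef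
    have hs : MeasurableSet s := hY measurableSet_Ici
    have hsm2 : MeasurableSet[MeasurableSpace.comap X2 inferInstance] s := by
      refine ⟨{g : Fin 1 → ℝ | q ≤ g 0}, ?_, rfl⟩
      exact (measurable_pi_apply 0) measurableSet_Ici
    have hind : condProbGE P Y X2 q =ᵐ[P] s.indicator (fun _ => (1:ℝ)) :=
      condProb_ae_eq_indicator P hX2 (Filter.EventuallyEq.refl _ _) hsm2
    have hcx' : ∀ φ : ℝ → ℝ, ConvexOn ℝ Set.univ φ →
        ∫ ω, φ (s.indicator (fun _ => (1:ℝ)) ω) ∂P ≤ ∫ ω, φ (condProb P X s ω) ∂P := by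
      intro φ hφ
      have h1 := hcx φ hφ
      have h2 : ∫ ω, φ (condProbGE P Y X2 q ω) ∂P
          = ∫ ω, φ (s.indicator (fun _ => (1:ℝ)) ω) ∂P :=
        integral_congr_ae (hind.fun_comp φ)
      rw [h2] at h1
      exact h1
    have hdi := condProb_dichotomy P hX hs hcx'
    set Z := condProb P X s with hZ
    set t := Z ⁻¹' {1} with ht
    have htm : MeasurableSet[MeasurableSpace.comap X inferInstance] t :=
      (stronglyMeasurable_condExp (m := MeasurableSpace.comap X inferInstance)).measurable
        (measurableSet_singleton (1:ℝ))
    obtain ⟨C, hCmeas, hCpre⟩ := htm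
    refine ⟨C, hCmeas, ?_⟩
    have hst : s =ᵐ[P] t := by
      refine Filter.eventuallyEq_set.mpr ?_
      filter_upwards [hdi] with ω hω
      constructor
      · intro hωs
        have : Z ω = 1 := by rw [← hω, Set.indicator_of_mem hωs]
        exact this
      · intro hωt
        by_contra hωs
        have h0 : Z ω = 0 := by rw [← hω, Set.indicator_of_notMem hωs]
        have h1' : Z ω = 1 := hωt
        norm_num [h0] at h1'
    rw [hCpre]
    exact hst
  · intro hPD p' Y' X' hY' hX' hYA' v hv φ hφ
    obtain ⟨f, hf, hYf⟩ := hPD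
    set q' := quantRV P Y' v with hq'
    set q := quantRV P Y v with hq
    set s := {ω | q ≤ Y ω} with hsdef
    set t := X ⁻¹' {x | q ≤ f x} with htdef
    have htm : MeasurableSet[MeasurableSpace.comap X inferInstance] t :=
      ⟨{x | q ≤ f x}, hf measurableSet_Ici, rfl⟩
    have htms : MeasurableSet t := hX (hf measurableSet_Ici)
    have hst : s =ᵐ[P] t := by
      refine Filter.eventuallyEq_set.mpr ?_
      filter_upwards [hYf] with ω hω
      simp only [hsdef, htdef, Set.mem_setOf_eq, Set.mem_preimage, hω]
    have hcond : condProbGE P Y X q =ᵐ[P] t.indicator (fun _ => (1:ℝ)) :=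
      condProb_ae_eq_indicator P hX hst htm
    have hrhs : ∫ ω, φ (condProbGE P Y X q ω) ∂P
        = (1 - (P s).toReal) * φ 0 + (P s).toReal * φ 1 := by
      have hcc : ∫ ω, φ (condProbGE P Y X q ω) ∂P
          = ∫ ω, φ (t.indicator (fun _ => (1:ℝ)) ω) ∂P :=
        integral_congr_ae (hcond.fun_comp φ)
      rw [hcc, integral_comp_indicator P htms φ, measure_congr hst]
    -- LHS
    set Z' := condProbGE P Y' X' q' with hZ'
    have hs' : MeasurableSet {ω | q' ≤ Y' ω} := hY' measurableSet_Ici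
    have hZ'01 : ∀ᵐ ω ∂P, Z' ω ∈ Set.Icc (0:ℝ) 1 := by
      filter_upwards [condProb_nonneg P hX' (s := {ω | q' ≤ Y' ω}),
        condProb_le_one P hX' hs'] with ω h1 h2
      exact ⟨h1, h2⟩
    have hZ'int : Integrable Z' P := integrable_condProb P hX'
    have hZ'mean : ∫ ω, Z' ω ∂P = (P {ω | q' ≤ Y' ω}).toReal := integral_condProb P hX' hs'
    have hmm : (P {ω | q' ≤ Y' ω}).toReal = (P s).toReal := by
      rw [hsdef]
      rw [show ({ω | q ≤ Y ω}) = {ω | quantRV P Y v ≤ Y ω} from rfl]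
      rw [show ({ω | q' ≤ Y' ω}) = {ω | quantRV P Y' v ≤ Y' ω} from rfl]
      rw [measure_quant_le_toReal P Y hY hv, measure_quant_le_toReal P Y' hY' hv,
        hYA, hYA']
    calc ∫ ω, φ (Z' ω) ∂P
        ≤ (1 - ∫ ω, Z' ω ∂P) * φ 0 + (∫ ω, Z' ω ∂P) * φ 1 :=
          integral_convex_comp_le hφ P hZ'int.aestronglyMeasurable hZ'01 hZ'int
      _ = (1 - (P s).toReal) * φ 0 + (P s).toReal * φ 1 := by rw [hZ'mean, hmm]
      _ = ∫ ω, φ (condProbGE P Y X q ω) ∂P := hrhs.symm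
end
end

section
/- Characterization of conditional independence (Theorem 1.2, Axiom O6). For every real random variable Y and all random vectors X and Z on the same probability space: (Y,X) =ccx (Y,(X,Z)) if and only if Y and Z are conditionally independent given X. -/
open MeasureTheory ProbabilityTheory Set Filter

noncomputable section

open scoped ENNReal

namespace CCXProof
open CCXPaper


variable {Ω : Type*} [m0 : MeasurableSpace Ω] {P : Measure Ω} [IsProbabilityMeasure P]
  {Y : Ω → ℝ}

lemma cdfRV_mono (P : Measure Ω) [IsProbabilityMeasure P] (Y : Ω → ℝ) :
    Monotone (cdfRV P Y) := fun s t hst =>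
  ENNReal.toReal_mono (measure_ne_top _ _)
    (measure_mono fun ω (h : Y ω ≤ s) => le_trans h hst)

lemma exists_cdf_ge (P : Measure Ω) [IsProbabilityMeasure P] (Y : Ω → ℝ) {v : ℝ} (hv : v < 1) :
    ∃ t : ℝ, v ≤ cdfRV P Y t := by
  rcases lt_or_ge v 0 with h0 | h0
  · exact ⟨0, le_trans h0.le ENNReal.toReal_nonneg⟩
  by_contra h
  push_neg at h
  have hmono : Monotone fun n : ℕ => {ω | Y ω ≤ (n : ℝ)} := by
    intro a b hab ω (hω : Y ω ≤ (a : ℝ))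
    exact le_trans hω (by exact_mod_cast hab)
  have hU : (⋃ n : ℕ, {ω | Y ω ≤ (n : ℝ)}) = univ := by
    ext ω
    simp only [mem_iUnion, mem_univ, iff_true, mem_setOf_eq]
    obtain ⟨n, hn⟩ := exists_nat_ge (Y ω)
    exact ⟨n, hn⟩
  have htend := tendsto_measure_iUnion_atTop (μ := P) hmono
  rw [hU] at htend
  have hub : ∀ n : ℕ, P {ω | Y ω ≤ (n : ℝ)} ≤ ENNReal.ofReal v := fun n =>
    (ENNReal.le_ofReal_iff_toReal_le (measure_ne_top _ _) h0).mpr (h n).le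
  have hle : P univ ≤ ENNReal.ofReal v := le_of_tendsto' htend hub
  rw [measure_univ] at hle
  exact absurd (lt_of_le_of_lt hle (by simpa using ENNReal.ofReal_lt_one.mpr hv)) (lt_irrefl _)

/-- The family of quantile upper sets. -/
def quantSets (P : Measure Ω) (Y : Ω → ℝ) : Set (Set ℝ) :=
  {B : Set ℝ | ∃ v ∈ Set.Ioo (0 : ℝ) 1, B = Ici (quantRV P Y v)}

lemma isPiSystem_quantSets (P : Measure Ω) (Y : Ω → ℝ) : IsPiSystem (quantSets P Y) := by
  rintro s ⟨v, hv, rfl⟩ t ⟨w, hw, rfl⟩ -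
  rw [Ici_inter_Ici]
  rcases le_total (quantRV P Y v) (quantRV P Y w) with h | h
  · rw [max_eq_right h]; exact ⟨w, hw, rfl⟩
  · rw [max_eq_left h]; exact ⟨v, hv, rfl⟩

lemma quantSets_measurable {G : Set ℝ}
    (hG : MeasurableSet[MeasurableSpace.generateFrom (quantSets P Y)] G) : MeasurableSet G := by
  refine MeasurableSpace.generateFrom_le ?_ _ hG
  rintro _ ⟨v, hv, rfl⟩
  exact measurableSet_Ici

/-- Lemma A: each `Ici y` agrees up to `P ∘ Y⁻¹`-null sets with a set in the σ-algebra
generated by the quantile upper sets. -/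
lemma lemmaA (P : Measure Ω) [IsProbabilityMeasure P] (hY : Measurable Y) (y : ℝ) :
    ∃ G : Set ℝ, MeasurableSet[MeasurableSpace.generateFrom (quantSets P Y)] G ∧
      P (Y ⁻¹' (symmDiff G (Ici y))) = 0 := by
  by_cases ha : P {ω | Y ω < y} = 1
  · refine ⟨∅, @MeasurableSet.empty ℝ (MeasurableSpace.generateFrom (quantSets P Y)), ?_⟩
    have h1 : symmDiff (∅ : Set ℝ) (Ici y) = Ici y := by
      simp [symmDiff_def]
    rw [h1]
    have h2 : Y ⁻¹' Ici y = {ω | Y ω < y}ᶜ := by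
      ext ω; simp [not_lt]
    have hms : MeasurableSet {ω | Y ω < y} := hY measurableSet_Iio
    rw [h2, measure_compl hms (measure_ne_top _ _), measure_univ, ha, tsub_self]
  · have ha1 : P {ω | Y ω < y} < 1 := lt_of_le_of_ne prob_le_one ha
    set ar : ℝ := (P {ω | Y ω < y}).toReal with har_def
    have har1 : ar < 1 := by
      have := ENNReal.toReal_lt_toReal (measure_ne_top P _) ENNReal.one_ne_top |>.mpr ha1
      simpa using this
    have har0 : 0 ≤ ar := ENNReal.toReal_nonneg
    set v : ℕ → ℝ := fun n => ar + (1 - ar) / (n + 2) with hv_def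
    have hv01 : ∀ n, v n ∈ Set.Ioo (0 : ℝ) 1 := by
      intro n
      constructor
      · have h1 : (0 : ℝ) < (1 - ar) / (n + 2) := div_pos (by linarith) (by positivity)
        simp only [hv_def]; linarith
      · have h2 : (1 - ar) / (n + 2) < 1 - ar := by
          apply div_lt_self (by linarith)
          have : (0 : ℝ) ≤ (n : ℝ) := Nat.cast_nonneg n
          linarith
        simp only [hv_def]; linarith
    have hav : ∀ n, ar < v n := by
      intro n
      have : (0 : ℝ) < (1 - ar) / (n + 2) := div_pos (by linarith) (by positivity)
      simp only [hv_def]; linarith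
    have hFlt : ∀ t, t < y → cdfRV P Y t ≤ ar := by
      intro t ht
      exact ENNReal.toReal_mono (measure_ne_top _ _)
        (measure_mono fun ω (h : Y ω ≤ t) => lt_of_le_of_lt h ht)
    have hne : ∀ n, Set.Nonempty {t : ℝ | v n ≤ cdfRV P Y t} :=
      fun n => exists_cdf_ge P Y (hv01 n).2
    have hsub : ∀ n, {t : ℝ | v n ≤ cdfRV P Y t} ⊆ Ici y := by
      intro n t ht
      by_contra h
      exact absurd (le_trans ht (hFlt t (not_le.mp h))) (not_le.mpr (hav n))
    have hq : ∀ n, y ≤ quantRV P Y (v n) := fun n => le_csInf (hne n) (hsub n)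
    have hqle : ∀ n t, v n ≤ cdfRV P Y t → quantRV P Y (v n) ≤ t := by
      intro n t ht
      exact csInf_le ⟨y, fun x hx => hsub n hx⟩ ht
    set G : Set ℝ := ⋃ n, Ici (quantRV P Y (v n)) with hG_def
    have hGgen : MeasurableSet[MeasurableSpace.generateFrom (quantSets P Y)] G :=
      MeasurableSet.iUnion fun n =>
        MeasurableSpace.measurableSet_generateFrom ⟨v n, hv01 n, rfl⟩
    have hGsub : G ⊆ Ici y := iUnion_subset fun n => Ici_subset_Ici.mpr (hq n)
    have hsymm : symmDiff G (Ici y) = Ici y \ G := symmDiff_of_le hGsub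
    refine ⟨G, hGgen, ?_⟩
    rw [hsymm]
    set B : Set ℝ := Ici y \ G with hB_def
    have hBcdf : ∀ t ∈ B, cdfRV P Y t ≤ ar := by
      rintro t ⟨hty, htG⟩
      by_contra h
      push_neg at h
      obtain ⟨n, hn⟩ := exists_nat_gt ((1 - ar) / (cdfRV P Y t - ar))
      have hdpos : (0 : ℝ) < cdfRV P Y t - ar := by linarith
      have hv_le : v n ≤ cdfRV P Y t := by
        have hn2 : (1 - ar) / (cdfRV P Y t - ar) < (n : ℝ) + 2 := by
          have : (0:ℝ) ≤ (n:ℝ) := Nat.cast_nonneg n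
          linarith
        have : (1 - ar) / ((n : ℝ) + 2) < cdfRV P Y t - ar := by
          rw [div_lt_iff₀ (by positivity)]
          calc (1 : ℝ) - ar = ((1 - ar) / (cdfRV P Y t - ar)) * (cdfRV P Y t - ar) := by
                field_simp
            _ < ((n : ℝ) + 2) * (cdfRV P Y t - ar) := by
                exact mul_lt_mul_of_pos_right hn2 hdpos
            _ = (cdfRV P Y t - ar) * ((n : ℝ) + 2) := by ring
        simp only [hv_def]; linarith
      exact htG (mem_iUnion.mpr ⟨n, hqle n t hv_le⟩)
    have hnull : ∀ t ∈ B, P (Y ⁻¹' Icc y t) = 0 := by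
      intro t ht
      have h1 : P {ω | Y ω ≤ t} ≤ P {ω | Y ω < y} :=
        (ENNReal.toReal_le_toReal (measure_ne_top _ _) (measure_ne_top _ _)).mp (hBcdf t ht)
      have heq : Y ⁻¹' Icc y t = {ω | Y ω ≤ t} \ {ω | Y ω < y} := by
        ext ω
        simp only [mem_preimage, mem_Icc, mem_diff, mem_setOf_eq, not_lt]
        tauto
      have hms : MeasurableSet {ω | Y ω < y} := hY measurableSet_Iio
      have hsub' : {ω | Y ω < y} ⊆ {ω | Y ω ≤ t} :=
        fun ω (hω : Y ω < y) => le_of_lt (lt_of_lt_of_le hω ht.1)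
      have hd := measure_diff (μ := P) hsub' hms.nullMeasurableSet (measure_ne_top _ _)
      rw [heq, hd]
      exact tsub_eq_zero_of_le h1
    rcases eq_empty_or_nonempty B with hB | hBne
    · simp [hB]
    · have hbdd : BddAbove B := by
        obtain ⟨t₀, ht₀⟩ := exists_cdf_ge P Y (show (ar + 1) / 2 < 1 by linarith)
        refine ⟨t₀, fun t ht => ?_⟩
        by_contra h
        push_neg at h
        have h1 : cdfRV P Y t₀ ≤ cdfRV P Y t := cdfRV_mono P Y h.le
        have h2 := hBcdf t ht
        linarith
      set m := sSup B with hm_def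
      by_cases hmB : m ∈ B
      · exact measure_mono_null
          (preimage_mono fun t ht => mem_Icc.mpr ⟨ht.1, le_csSup hbdd ht⟩) (hnull m hmB)
      · have hcover : B ⊆ ⋃ n : ℕ, Icc y (m - 1 / (n + 1)) := by
          intro t ht
          have htm : t < m := lt_of_le_of_ne (le_csSup hbdd ht) fun h => hmB (h ▸ ht)
          obtain ⟨n, hn⟩ := exists_nat_one_div_lt (sub_pos.mpr htm)
          exact mem_iUnion.mpr ⟨n, ht.1, by linarith⟩
        refine measure_mono_null (preimage_mono hcover) ?_
        rw [preimage_iUnion]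
        refine measure_iUnion_null fun n => ?_
        rcases lt_or_ge (m - 1 / (n + 1)) y with h | h
        · rw [Icc_eq_empty (not_le.mpr h)]; simp
        · obtain ⟨t, htB, hlt⟩ := exists_lt_of_lt_csSup hBne
            (show m - 1 / ((n : ℝ) + 1) < m by
              have : (0 : ℝ) < 1 / ((n : ℝ) + 1) := by positivity
              linarith)
          exact measure_mono_null (preimage_mono (Icc_subset_Icc_right hlt.le)) (hnull t htB)



lemma condAux_nonneg {Ω : Type*} {m : MeasurableSpace Ω} [m0 : MeasurableSpace Ω]
    (P : Measure Ω) (s : Set Ω) :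
    0 ≤ᵐ[P] P[s.indicator (fun _ => (1 : ℝ))|m] :=
  condExp_nonneg (Eventually.of_forall fun ω =>
    Set.indicator_nonneg (fun _ _ => zero_le_one) ω)

lemma indAux_integrable {Ω : Type*} [m0 : MeasurableSpace Ω] {P : Measure Ω}
    [IsProbabilityMeasure P] {s : Set Ω} (hs : MeasurableSet s) :
    Integrable (s.indicator fun _ => (1 : ℝ)) P :=
  (integrable_const (1 : ℝ)).indicator hs

lemma condAux_le_one {Ω : Type*} {m : MeasurableSpace Ω} [m0 : MeasurableSpace Ω]
    {P : Measure Ω} [IsProbabilityMeasure P] (hm : m ≤ m0) {s : Set Ω}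
    (hs : MeasurableSet s) :
    P[s.indicator (fun _ => (1 : ℝ))|m] ≤ᵐ[P] fun _ => 1 := by
  have h := condExp_mono (m := m) (μ := P) (indAux_integrable hs)
    (integrable_const (1 : ℝ))
    (Eventually.of_forall fun ω => Set.indicator_le_self' (fun _ _ => zero_le_one) ω)
  have h2 : P[(fun _ : Ω => (1 : ℝ))|m] = fun _ => 1 := condExp_const hm (1 : ℝ)
  rwa [h2] at h

lemma condAux_norm_le_one {Ω : Type*} {m : MeasurableSpace Ω} [m0 : MeasurableSpace Ω]
    {P : Measure Ω} [IsProbabilityMeasure P] (hm : m ≤ m0) {s : Set Ω}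
    (hs : MeasurableSet s) :
    ∀ᵐ ω ∂P, ‖(P[s.indicator (fun _ => (1 : ℝ))|m]) ω‖ ≤ 1 := by
  filter_upwards [condAux_nonneg (m := m) P s, condAux_le_one hm hs] with ω h0 h1
  have h0' : (0 : ℝ) ≤ (P[s.indicator (fun _ => (1 : ℝ))|m]) ω := h0
  have h1' : (P[s.indicator (fun _ => (1 : ℝ))|m]) ω ≤ 1 := h1
  rw [Real.norm_eq_abs, abs_le]
  exact ⟨by linarith, h1'⟩

lemma condAux_mul_integrable {Ω : Type*} {m : MeasurableSpace Ω} [m0 : MeasurableSpace Ω]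
    {P : Measure Ω} [IsProbabilityMeasure P] (hm : m ≤ m0) {s : Set Ω}
    (hs : MeasurableSet s) {g : Ω → ℝ} (hg : Integrable g P) :
    Integrable (P[s.indicator (fun _ => (1 : ℝ))|m] * g) P :=
  Integrable.bdd_mul (f := P[s.indicator (fun _ => (1 : ℝ))|m]) hg (stronglyMeasurable_condExp.mono hm).aestronglyMeasurable
    (condAux_norm_le_one hm hs)

/-- Self-adjointness of conditional probability. -/
lemma condAux_adj {Ω : Type*} {m : MeasurableSpace Ω} [m0 : MeasurableSpace Ω]
    {P : Measure Ω} [IsProbabilityMeasure P] (hm : m ≤ m0) {s A : Set Ω}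
    (hs : MeasurableSet s) (hA : MeasurableSet A) :
    ∫ ω in A, (P[s.indicator (fun _ => (1 : ℝ))|m]) ω ∂P
      = ∫ ω in s, (P[A.indicator (fun _ => (1 : ℝ))|m]) ω ∂P := by
  set g := P[s.indicator (fun _ => (1 : ℝ))|m] with hg_def
  set u := P[A.indicator (fun _ => (1 : ℝ))|m] with hu_def
  have hint_gA : Integrable (g * A.indicator fun _ => (1 : ℝ)) P :=
    condAux_mul_integrable hm hs (indAux_integrable hA)
  have hint_us : Integrable (u * s.indicator fun _ => (1 : ℝ)) P :=
    condAux_mul_integrable hm hA (indAux_integrable hs)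
  have h1 : P[g * A.indicator (fun _ => (1 : ℝ))|m] =ᵐ[P] g * u :=
    condExp_mul_of_stronglyMeasurable_left stronglyMeasurable_condExp hint_gA (indAux_integrable hA)
  have h2 : P[u * s.indicator (fun _ => (1 : ℝ))|m] =ᵐ[P] u * g :=
    condExp_mul_of_stronglyMeasurable_left stronglyMeasurable_condExp hint_us (indAux_integrable hs)
  have e1 : ∫ ω in A, g ω ∂P = ∫ ω, (g * A.indicator fun _ => (1 : ℝ)) ω ∂P := by
    rw [← integral_indicator hA]
    refine integral_congr_ae (Eventually.of_forall fun ω => ?_)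
    by_cases hω : ω ∈ A <;>
      simp [Set.indicator_of_mem, Set.indicator_of_notMem, hω]
  have e2 : ∫ ω in s, u ω ∂P = ∫ ω, (u * s.indicator fun _ => (1 : ℝ)) ω ∂P := by
    rw [← integral_indicator hs]
    refine integral_congr_ae (Eventually.of_forall fun ω => ?_)
    by_cases hω : ω ∈ s <;>
      simp [Set.indicator_of_mem, Set.indicator_of_notMem, hω]
  rw [e1, e2, ← integral_condExp hm (f := g * A.indicator fun _ => (1 : ℝ)),
    ← integral_condExp hm (f := u * s.indicator fun _ => (1 : ℝ)),
    integral_congr_ae h1, integral_congr_ae h2]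
  refine integral_congr_ae (Eventually.of_forall fun ω => ?_)
  simp [mul_comm]

/-- Equality in convex order plus tower structure forces a.e. equality. -/
lemma eq_of_cx_eq {Ω : Type*} {m₁ m₂ : MeasurableSpace Ω} [m0 : MeasurableSpace Ω]
    {P : Measure Ω} [IsProbabilityMeasure P] (hm12 : m₁ ≤ m₂) (hm2 : m₂ ≤ m0)
    {s : Set Ω} (hs : MeasurableSet s)
    (hle : CxLE P (P[s.indicator (fun _ => (1 : ℝ))|m₁]) P
      (P[s.indicator (fun _ => (1 : ℝ))|m₂]))
    (hge : CxLE P (P[s.indicator (fun _ => (1 : ℝ))|m₂]) P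
      (P[s.indicator (fun _ => (1 : ℝ))|m₁])) :
    P[s.indicator (fun _ => (1 : ℝ))|m₂] =ᵐ[P] P[s.indicator (fun _ => (1 : ℝ))|m₁] := by
  have hm1 : m₁ ≤ m0 := hm12.trans hm2
  set S := P[s.indicator (fun _ => (1 : ℝ))|m₁] with hS_def
  set T := P[s.indicator (fun _ => (1 : ℝ))|m₂] with hT_def
  have hSint : Integrable S P := integrable_condExp
  have hTint : Integrable T P := integrable_condExp
  have hsq : ∫ ω, (S ω) ^ 2 ∂P = ∫ ω, (T ω) ^ 2 ∂P :=
    le_antisymm (hle _ (Even.convexOn_pow even_two)) (hge _ (Even.convexOn_pow even_two))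
  have hST : Integrable (S * T) P := condAux_mul_integrable hm1 hs hTint
  have hSS : Integrable (S * S) P := condAux_mul_integrable hm1 hs hSint
  have hTT : Integrable (T * T) P := condAux_mul_integrable hm2 hs hTint
  have htower : P[T|m₁] =ᵐ[P] S := condExp_condExp_of_le hm12 hm2
  have hmul : P[S * T|m₁] =ᵐ[P] S * P[T|m₁] :=
    condExp_mul_of_stronglyMeasurable_left stronglyMeasurable_condExp hST hTint
  have hprod : ∫ ω, (S * T) ω ∂P = ∫ ω, (S * S) ω ∂P := by
    rw [← integral_condExp hm1 (f := S * T), integral_congr_ae hmul]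
    refine integral_congr_ae ?_
    filter_upwards [htower] with ω hω
    simp [hω]
  have hDD : Integrable (fun ω => (T ω - S ω) * (T ω - S ω)) P := by
    have hD : Integrable (T - S) P := hTint.sub hSint
    have h : Integrable ((T - S) * (T - S)) P := by
      refine Integrable.bdd_mul (f := T - S) (c := 2) hD
        ((stronglyMeasurable_condExp.mono hm2).sub
          (stronglyMeasurable_condExp.mono hm1)).aestronglyMeasurable ?_
      filter_upwards [condAux_nonneg (m := m₁) P s, condAux_le_one hm1 hs,
        condAux_nonneg (m := m₂) P s, condAux_le_one hm2 hs] with ω h1 h2 h3 h4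
      have h1' : (0 : ℝ) ≤ S ω := h1
      have h2' : S ω ≤ 1 := h2
      have h3' : (0 : ℝ) ≤ T ω := h3
      have h4' : T ω ≤ 1 := h4
      rw [Pi.sub_apply, Real.norm_eq_abs, abs_le]
      constructor <;> linarith
    exact h
  have h267 : ∫ ω, (T ω - S ω) * (T ω - S ω) ∂P = 0 := by
    have hexp : (fun ω => (T ω - S ω) * (T ω - S ω))
        = fun ω => (T * T + S * S) ω - ((2 : ℝ) • (S * T)) ω := by
      funext ω
      simp only [Pi.add_apply, Pi.mul_apply, Pi.smul_apply, smul_eq_mul]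
      ring
    rw [hexp, integral_sub (hTT.add hSS) (hST.smul (2 : ℝ))]
    have e1 : ∫ a, (T * T + S * S) a ∂P = ∫ a, (T * T) a ∂P + ∫ a, (S * S) a ∂P := by
      simp only [Pi.add_apply]
      exact integral_add hTT hSS
    have e2 : ∫ a, ((2 : ℝ) • (S * T)) a ∂P = 2 * ∫ a, (S * T) a ∂P := by
      simp only [Pi.smul_apply, smul_eq_mul]
      exact MeasureTheory.integral_const_mul 2 _
    have hsq' : ∫ ω, (S * S) ω ∂P = ∫ ω, (T * T) ω ∂P := by
      simpa only [pow_two, Pi.mul_apply] using hsq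
    rw [e1, e2, hprod, hsq']
    ring
  have hzero : (fun ω => (T ω - S ω) * (T ω - S ω)) =ᵐ[P] 0 :=
    (integral_eq_zero_iff_of_nonneg (fun ω => mul_self_nonneg _) hDD).mp h267
  filter_upwards [hzero] with ω hω
  have h : (T ω - S ω) * (T ω - S ω) = 0 := hω
  have := mul_self_eq_zero.mp h
  linarith


end CCXProof


open CCXPaper in
/-- Characterization of conditional independence:
`(Y, X) =ccx (Y, (X, Z))` if and only if `Y` and `Z` are conditionally independent
given `X`. -/
theorem ccx_eq_iff_condIndep
    {Ω : Type*} [MeasurableSpace Ω] (P : Measure Ω) [IsProbabilityMeasure P]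
    (hPna : Nonatomic P)
    {p r : ℕ} (Y : Ω → ℝ) (X : Ω → Fin p → ℝ) (Z : Ω → Fin r → ℝ)
    (hY : Measurable Y) (hX : Measurable X) (hZ : Measurable Z) :
    CCXeq P Y X P Y (fun ω => (X ω, Z ω)) ↔ CondIndepGiven P Y Z X := by
  classical
  have hXZ : Measurable (fun ω => (X ω, Z ω)) := hX.prodMk hZ
  have hmX : MeasurableSpace.comap X inferInstance ≤ ‹MeasurableSpace Ω› := hX.comap_le
  have hmXZ : MeasurableSpace.comap (fun ω => (X ω, Z ω)) inferInstance
      ≤ ‹MeasurableSpace Ω› := hXZ.comap_le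
  have hle : MeasurableSpace.comap X inferInstance
      ≤ MeasurableSpace.comap (fun ω => (X ω, Z ω)) inferInstance := by
    have h1 : (MeasurableSpace.comap (Prod.fst : (Fin p → ℝ) × (Fin r → ℝ) → Fin p → ℝ)
        inferInstance).comap (fun ω => (X ω, Z ω))
        = MeasurableSpace.comap X inferInstance := by
      rw [MeasurableSpace.comap_comp]
      rfl
    rw [← h1]
    exact MeasurableSpace.comap_mono measurable_fst.comap_le
  constructor
  · -- forward direction
    intro hccx B hB
    have hYB : MeasurableSet (Y ⁻¹' B) := hY hB
    -- Step 1: a.e. equality at quantile levels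
    have key1 : ∀ v ∈ Set.Ioo (0 : ℝ) 1,
        condProbGE P Y (fun ω => (X ω, Z ω)) (quantRV P Y v)
          =ᵐ[P] condProbGE P Y X (quantRV P Y v) := by
      intro v hv
      have hset : MeasurableSet {ω | quantRV P Y v ≤ Y ω} :=
        (hY measurableSet_Ici : MeasurableSet (Y ⁻¹' Ici (quantRV P Y v)))
      exact CCXProof.eq_of_cx_eq hle hmXZ hset (hccx.1 v hv) (hccx.2 v hv)
    -- uniqueness of conditional expectation
    refine (ae_eq_condExp_of_forall_setIntegral_eq hmXZ
      (CCXProof.indAux_integrable hYB)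
      (fun A hAm hAfin => integrable_condExp.integrableOn) ?_ ?_).symm
    swap
    · exact (stronglyMeasurable_condExp.mono hle).aestronglyMeasurable
    intro A hAm hAfin
    have hA : MeasurableSet A := hmXZ _ hAm
    set u := P[A.indicator (fun _ => (1 : ℝ))|MeasurableSpace.comap X inferInstance]
      with hu_def
    have hu0 : 0 ≤ᵐ[P] u := CCXProof.condAux_nonneg P A
    have hu1 : u ≤ᵐ[P] fun _ => 1 := CCXProof.condAux_le_one hmX hA
    have huSM : Measurable u := (stronglyMeasurable_condExp.mono hmX).measurable
    set w : Ω → ENNReal := fun ω => ENNReal.ofReal (u ω) with hw_def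
    have hwmeas : Measurable w := huSM.ennreal_ofReal
    have hw1 : ∀ᵐ ω ∂P, w ω ≤ 1 := by
      filter_upwards [hu1] with ω h
      have h' : u ω ≤ 1 := h
      show ENNReal.ofReal (u ω) ≤ 1
      simpa using ENNReal.ofReal_le_ofReal h'
    have hwfin : ∫⁻ ω, w ω ∂P ≠ ∞ := by
      have h1 : ∫⁻ ω, w ω ∂P ≤ ∫⁻ _, 1 ∂P := lintegral_mono_ae hw1
      rw [lintegral_one, measure_univ] at h1
      exact (h1.trans_lt ENNReal.one_lt_top).ne
    haveI : IsFiniteMeasure (P.withDensity w) := isFiniteMeasure_withDensity hwfin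
    set μ₁ : Measure ℝ := (P.restrict A).map Y with hμ₁_def
    set μ₂ : Measure ℝ := (P.withDensity w).map Y with hμ₂_def
    haveI : IsFiniteMeasure μ₁ := Measure.isFiniteMeasure_map _ _
    haveI : IsFiniteMeasure μ₂ := Measure.isFiniteMeasure_map _ _
    -- computation of μ₁
    have comp₁ : ∀ C : Set ℝ, MeasurableSet C →
        (μ₁ C).toReal = ∫ ω in A, (Y ⁻¹' C).indicator (fun _ => (1 : ℝ)) ω ∂P := by
      intro C hC
      rw [hμ₁_def, Measure.map_apply hY hC,
        integral_indicator_const (1 : ℝ) (hY hC), smul_eq_mul, mul_one]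
      rfl
    -- computation of μ₂
    have comp₂ : ∀ C : Set ℝ, MeasurableSet C →
        (μ₂ C).toReal = ∫ ω in A,
          (P[(Y ⁻¹' C).indicator (fun _ => (1 : ℝ))|MeasurableSpace.comap X inferInstance])
            ω ∂P := by
      intro C hC
      have hYC : MeasurableSet (Y ⁻¹' C) := hY hC
      have step1 : μ₂ C = ∫⁻ ω in Y ⁻¹' C, w ω ∂P := by
        rw [hμ₂_def, Measure.map_apply hY hC, withDensity_apply _ hYC]
      have step2 : ∫ ω in Y ⁻¹' C, u ω ∂P = (∫⁻ ω in Y ⁻¹' C, w ω ∂P).toReal := by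
        rw [integral_eq_lintegral_of_nonneg_ae (ae_restrict_of_ae hu0)
          (huSM.stronglyMeasurable.aestronglyMeasurable.restrict)]
      have step3 := CCXProof.condAux_adj (P := P) hmX hYC hA
      rw [step1, ← step2, step3]
    -- agreement at quantile sets
    have hquant : ∀ v ∈ Set.Ioo (0 : ℝ) 1,
        μ₁ (Ici (quantRV P Y v)) = μ₂ (Ici (quantRV P Y v)) := by
      intro v hv
      set q := quantRV P Y v with hq_def
      have hYq : MeasurableSet (Y ⁻¹' Ici q) := hY measurableSet_Ici
      have htoReal : (μ₁ (Ici q)).toReal = (μ₂ (Ici q)).toReal := by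
        rw [comp₁ _ measurableSet_Ici, comp₂ _ measurableSet_Ici]
        rw [← setIntegral_condExp hmXZ (CCXProof.indAux_integrable hYq) hAm]
        refine integral_congr_ae (ae_restrict_of_ae ?_)
        exact key1 v hv
      exact (ENNReal.toReal_eq_toReal_iff' (measure_ne_top _ _) (measure_ne_top _ _)).mp htoReal
    -- equal total mass
    have htot : μ₁ Set.univ = μ₂ Set.univ := by
      have h1 : (μ₁ Set.univ).toReal = (μ₂ Set.univ).toReal := by
        rw [comp₁ _ MeasurableSet.univ, comp₂ _ MeasurableSet.univ]
        have he : Y ⁻¹' (Set.univ : Set ℝ) = Set.univ := by simp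
        rw [he]
        have hind : (Set.univ : Set Ω).indicator (fun _ => (1 : ℝ)) = fun _ => 1 :=
          Set.indicator_univ _
        rw [hind, condExp_const hmX (1 : ℝ)]
      exact (ENNReal.toReal_eq_toReal_iff' (measure_ne_top _ _) (measure_ne_top _ _)).mp h1
    -- agreement on the generated σ-algebra
    have hGen : ∀ G : Set ℝ,
        MeasurableSet[MeasurableSpace.generateFrom (CCXProof.quantSets P Y)] G →
          μ₁ G = μ₂ G := by
      intro G hG
      refine MeasurableSpace.induction_on_inter (C := fun t _ => μ₁ t = μ₂ t)
        (m := MeasurableSpace.generateFrom (CCXProof.quantSets P Y)) rfl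
        (CCXProof.isPiSystem_quantSets P Y) ?_ ?_ ?_ ?_ G hG
      · simp
      · rintro t ⟨v, hv, rfl⟩
        exact hquant v hv
      · intro t htm ht
        have htB : MeasurableSet t := CCXProof.quantSets_measurable htm
        rw [measure_compl htB (measure_ne_top _ _), measure_compl htB (measure_ne_top _ _),
          htot, ht]
      · intro f hdisj hmeas hf
        rw [measure_iUnion hdisj fun i => CCXProof.quantSets_measurable (hmeas i),
          measure_iUnion hdisj fun i => CCXProof.quantSets_measurable (hmeas i)]
        exact tsum_congr hf
    -- agreement on all Ici
    have hIci : ∀ y : ℝ, μ₁ (Ici y) = μ₂ (Ici y) := by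
      intro y
      obtain ⟨G, hGgen, hGnull⟩ := CCXProof.lemmaA P hY y
      have hGB : MeasurableSet G := CCXProof.quantSets_measurable hGgen
      have hN : MeasurableSet (symmDiff G (Ici y)) := by
        rw [Set.symmDiff_def]
        exact (hGB.diff measurableSet_Ici).union (measurableSet_Ici.diff hGB)
      have h1 : μ₁ (symmDiff G (Ici y)) = 0 := by
        rw [hμ₁_def, Measure.map_apply hY hN, Measure.restrict_apply (hY hN)]
        exact measure_mono_null Set.inter_subset_left hGnull
      have h2 : μ₂ (symmDiff G (Ici y)) = 0 := by
        rw [hμ₂_def, Measure.map_apply hY hN, withDensity_apply _ (hY hN)]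
        have hb : ∫⁻ ω in Y ⁻¹' symmDiff G (Ici y), w ω ∂P
            ≤ ∫⁻ _ in Y ⁻¹' symmDiff G (Ici y), 1 ∂P :=
          lintegral_mono_ae (ae_restrict_of_ae hw1)
        rw [setLIntegral_one, hGnull] at hb
        exact le_antisymm hb zero_le
      have e1 : μ₁ G = μ₁ (Ici y) := measure_congr (measure_symmDiff_eq_zero_iff.mp h1)
      have e2 : μ₂ G = μ₂ (Ici y) := measure_congr (measure_symmDiff_eq_zero_iff.mp h2)
      rw [← e1, ← e2]
      exact hGen G hGgen
    have hμeq : μ₁ = μ₂ := Measure.ext_of_Ici μ₁ μ₂ hIci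
    -- conclude
    show ∫ ω in A,
        (P[(Y ⁻¹' B).indicator (fun _ => (1 : ℝ))|MeasurableSpace.comap X inferInstance]) ω ∂P
      = ∫ ω in A, (Y ⁻¹' B).indicator (fun _ => (1 : ℝ)) ω ∂P
    rw [← comp₂ B hB, ← comp₁ B hB, hμeq]
  · -- backward direction
    intro hci
    have key : ∀ v ∈ Set.Ioo (0 : ℝ) 1,
        condProbGE P Y (fun ω => (X ω, Z ω)) (quantRV P Y v)
          =ᵐ[P] condProbGE P Y X (quantRV P Y v) := by
      intro v hv
      exact hci (Ici (quantRV P Y v)) measurableSet_Ici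
    constructor
    · intro v hv φ hφ
      exact le_of_eq (integral_congr_ae (((key v hv).symm).fun_comp φ))
    · intro v hv φ hφ
      exact le_of_eq (integral_congr_ae ((key v hv).fun_comp φ))
end
end

section
/- Transformation invariance of the conditional convex order (Theorem 1.2, Axiom O7). For every real random variable Y, every ℝ^p-valued random vector X, every strictly increasing function g : ℝ → ℝ, and every Borel-measurable bijection h : ℝ^p → ℝ^p, one has (Y,X) =ccx (g(Y), h(X)). -/
open MeasureTheory ProbabilityTheory Set Filter

noncomputable section

namespace CCXPaper

variable {Ω'' : Type*} [MeasurableSpace Ω'']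

lemma cdfRV_eq_cdf (P : Measure Ω'') [IsProbabilityMeasure P] {Z : Ω'' → ℝ}
    (hZ : Measurable Z) (y : ℝ) : cdfRV P Z y = cdf (P.map Z) y := by
  have : IsProbabilityMeasure (P.map Z) := Measure.isProbabilityMeasure_map hZ.aemeasurable
  rw [cdf_eq_real, measureReal_def, Measure.map_apply hZ measurableSet_Iic]
  rfl

lemma cdfRV_mono (P : Measure Ω'') [IsProbabilityMeasure P] {Z : Ω'' → ℝ}
    (hZ : Measurable Z) : Monotone (cdfRV P Z) := by
  intro a b hab
  rw [cdfRV_eq_cdf P hZ, cdfRV_eq_cdf P hZ]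
  exact (cdf (P.map Z)).mono hab

/-- The set `{y | v ≤ F_Z(y)}` is nonempty for `v < 1`. -/
lemma quant_set_nonempty (P : Measure Ω'') [IsProbabilityMeasure P] {Z : Ω'' → ℝ}
    (hZ : Measurable Z) {v : ℝ} (hv : v < 1) :
    {y : ℝ | v ≤ cdfRV P Z y}.Nonempty := by
  have : IsProbabilityMeasure (P.map Z) := Measure.isProbabilityMeasure_map hZ.aemeasurable
  have h1 : Tendsto (cdf (P.map Z)) atTop (nhds 1) := tendsto_cdf_atTop _
  have := (h1.eventually (eventually_gt_nhds hv)).exists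
  obtain ⟨y, hy⟩ := this
  refine ⟨y, ?_⟩
  show v ≤ cdfRV P Z y
  rw [cdfRV_eq_cdf P hZ]; exact hy.le

lemma quant_set_bddBelow (P : Measure Ω'') [IsProbabilityMeasure P] {Z : Ω'' → ℝ}
    (hZ : Measurable Z) {v : ℝ} (hv : 0 < v) :
    BddBelow {y : ℝ | v ≤ cdfRV P Z y} := by
  have : IsProbabilityMeasure (P.map Z) := Measure.isProbabilityMeasure_map hZ.aemeasurable
  have h0 : Tendsto (cdf (P.map Z)) atBot (nhds 0) := tendsto_cdf_atBot _
  obtain ⟨y, hy⟩ := (h0.eventually (eventually_lt_nhds hv)).exists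
  refine ⟨y, fun a ha => ?_⟩
  by_contra hya
  push_neg at hya
  have h2 : cdfRV P Z a ≤ cdfRV P Z y := cdfRV_mono P hZ hya.le
  have ha' : v ≤ cdfRV P Z a := ha
  have := le_trans ha' h2
  rw [cdfRV_eq_cdf P hZ] at this
  exact absurd this (not_le.mpr hy)

/-- The cdf attains at least `v` at the quantile. -/
lemma quant_mem (P : Measure Ω'') [IsProbabilityMeasure P] {Z : Ω'' → ℝ}
    (hZ : Measurable Z) {v : ℝ} (hv : v ∈ Set.Ioo (0 : ℝ) 1) :
    v ≤ cdfRV P Z (quantRV P Z v) := by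
  have : IsProbabilityMeasure (P.map Z) := Measure.isProbabilityMeasure_map hZ.aemeasurable
  set A := {y : ℝ | v ≤ cdfRV P Z y} with hA
  have hne := quant_set_nonempty P hZ hv.2
  have hbdd := quant_set_bddBelow P hZ hv.1
  set q := sInf A with hq
  -- every y > q satisfies v ≤ F y
  have hgt : ∀ y, q < y → v ≤ cdfRV P Z y := by
    intro y hy
    obtain ⟨a, haA, hay⟩ := exists_lt_of_csInf_lt hne hy
    exact le_trans haA (cdfRV_mono P hZ hay.le)
  -- right continuity of cdf at q
  have hrc : Tendsto (cdf (P.map Z)) (nhdsWithin q (Set.Ioi q)) (nhds (cdf (P.map Z) q)) := by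
    have := (cdf (P.map Z)).right_continuous q
    exact this.tendsto.mono_left (nhdsWithin_mono q Ioi_subset_Ici_self)
  rw [cdfRV_eq_cdf P hZ]
  refine ge_of_tendsto hrc ?_
  filter_upwards [self_mem_nhdsWithin] with y hy
  rw [← cdfRV_eq_cdf P hZ]
  exact hgt y hy

/-- Key event identity: `{g∘Y ≥ q_{g∘Y}(v)} = {Y ≥ q_Y(v)}`. -/
lemma quant_event (P : Measure Ω'') [IsProbabilityMeasure P] {Y : Ω'' → ℝ}
    (hY : Measurable Y) {g : ℝ → ℝ} (hg : StrictMono g) {v : ℝ}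
    (hv : v ∈ Set.Ioo (0 : ℝ) 1) :
    {ω | quantRV P (fun ω => g (Y ω)) v ≤ g (Y ω)} = {ω | quantRV P Y v ≤ Y ω} := by
  have hgY : Measurable fun ω => g (Y ω) := (hg.monotone.measurable).comp hY
  have hcomp : ∀ y : ℝ, cdfRV P (fun ω => g (Y ω)) (g y) = cdfRV P Y y := by
    intro y
    have hset : {ω | g (Y ω) ≤ g y} = {ω | Y ω ≤ y} := by
      ext ω; exact hg.le_iff_le
    unfold cdfRV
    rw [hset]
  ext ω
  simp only [Set.mem_setOf_eq]
  constructor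
  · intro hle
    -- F_Y (Y ω) = F_{gY} (g (Y ω)) ≥ F_{gY} (q') ≥ v, so Y ω ∈ A_Y, so q ≤ Y ω
    have h1 : v ≤ cdfRV P (fun ω => g (Y ω)) (g (Y ω)) :=
      le_trans (quant_mem P hgY hv) (cdfRV_mono P hgY hle)
    rw [hcomp] at h1
    exact csInf_le (quant_set_bddBelow P hY hv.1) h1
  · intro hle
    have hq : v ≤ cdfRV P Y (quantRV P Y v) := quant_mem P hY hv
    have : v ≤ cdfRV P (fun ω => g (Y ω)) (g (quantRV P Y v)) := by rw [hcomp]; exact hq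
    calc quantRV P (fun ω => g (Y ω)) v ≤ g (quantRV P Y v) :=
          csInf_le (quant_set_bddBelow P hgY hv.1) this
      _ ≤ g (Y ω) := hg.monotone hle

end CCXPaper

open CCXPaper in
/-- Transformation invariance:
`(Y, X) =ccx (g(Y), h(X))` for every strictly increasing `g : ℝ → ℝ` and every
Borel-measurable bijection `h : ℝ^p → ℝ^p`. -/
theorem ccx_transformation_invariance
    {Ω : Type*} [MeasurableSpace Ω] (P : Measure Ω) [IsProbabilityMeasure P]
    (hPna : Nonatomic P)
    {p : ℕ} (Y : Ω → ℝ) (X : Ω → Fin p → ℝ)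
    (hY : Measurable Y) (hX : Measurable X)
    (g : ℝ → ℝ) (hg : StrictMono g)
    (h : (Fin p → ℝ) → (Fin p → ℝ)) (hh : Measurable h) (hbij : Function.Bijective h) :
    CCXeq P Y X P (fun ω => g (Y ω)) (fun ω => h (X ω)) := by
  have hemb : MeasurableEmbedding h := hh.measurableEmbedding hbij.injective
  have hcomap : MeasurableSpace.comap h (inferInstance : MeasurableSpace (Fin p → ℝ))
      = (inferInstance : MeasurableSpace (Fin p → ℝ)) := by
    refine le_antisymm hh.comap_le ?_
    intro s hs
    exact ⟨h '' s, hemb.measurableSet_image.2 hs, by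
      rw [Function.Injective.preimage_image hbij.injective]⟩
  have hcomapX : MeasurableSpace.comap (fun ω => h (X ω)) inferInstance
      = MeasurableSpace.comap X (inferInstance : MeasurableSpace (Fin p → ℝ)) := by
    rw [show (fun ω => h (X ω)) = h ∘ X from rfl, ← MeasurableSpace.comap_comp, hcomap]
  have key : ∀ v ∈ Set.Ioo (0 : ℝ) 1,
      condProbGE P (fun ω => g (Y ω)) (fun ω => h (X ω))
          (quantRV P (fun ω => g (Y ω)) v)
        = condProbGE P Y X (quantRV P Y v) := by
    intro v hv
    unfold condProbGE condProb
    rw [quant_event P hY hg hv, hcomapX]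
  constructor
  · intro v hv φ hφ
    rw [key v hv]
  · intro v hv φ hφ
    rw [key v hv]
end
end

section
/- Distributional invariance of the conditional convex order (Theorem 1.2, Axiom O8). For every real random variable Y and every random vector X = (X_1,…,X_p): (Y,X) =ccx (F_Y(Y), X) and (Y,X) =ccx (Y, (F_{X_1}(X_1),…,F_{X_p}(X_p))), where F_Y and F_{X_k} denote the respective cumulative distribution functions. -/
open MeasureTheory ProbabilityTheory Set Filter

noncomputable section

/-!
For `0 < v < 1` the quantile is the lower Galois inverse of the cdf: `q_Y(v) ≤ y ↔ v ≤ F_Y(y)`.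
A random variable charges no flat stretch of its cdf, so `{F_Y(Y) ≤ F_Y(y)} = {Y ≤ y}` a.s.
Hence `W = F_Y(Y)` has `F_W ∘ F_Y = F_Y`, which makes the events `{q_Y(v) ≤ Y}` and
`{q_W(v) ≤ W}` literally equal. For the covariates, `σ(F(X)) ⊆ σ(X)` and, by the same a.s.
identity applied coordinatewise, every event of `σ(X)` agrees a.s. with one of `σ(F(X))`; two
such σ-algebras yield the same conditional expectations.
-/

lemma StieltjesFunction.sInf_le_iff (f : StieltjesFunction ℝ) {v z : ℝ}
    (hbdd : BddBelow {y | v ≤ f y}) (hne : {y | v ≤ f y}.Nonempty) :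
    sInf {y | v ≤ f y} ≤ z ↔ v ≤ f z := by
  refine ⟨fun h => ?_, fun h => csInf_le hbdd h⟩
  suffices v ≤ f (sInf {y | v ≤ f y}) from this.trans (f.mono h)
  refine ge_of_tendsto ((f.right_continuous _).mono Ioi_subset_Ici_self)
    (eventually_nhdsWithin_of_forall fun x hx => ?_)
  obtain ⟨y, hy, hyx⟩ := exists_lt_of_csInf_lt hne hx
  exact hy.trans (f.mono hyx.le)

namespace MeasureTheory

abbrev aeCompletion {Ω : Type*} {m₀ : MeasurableSpace Ω} (m : MeasurableSpace Ω)
    (μ : Measure[m₀] Ω) : MeasurableSpace Ω where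
  MeasurableSet' s := ∃ t, MeasurableSet[m] t ∧ s =ᵐ[μ] t
  measurableSet_empty := ⟨∅, MeasurableSet.empty, EventuallyEq.rfl⟩
  measurableSet_compl := fun _ ⟨t, ht, hst⟩ => ⟨tᶜ, ht.compl, hst.compl⟩
  measurableSet_iUnion := fun _ hs => by
    choose t ht hst using hs
    exact ⟨⋃ n, t n, MeasurableSet.iUnion ht, Filter.EventuallyEq.countable_iUnion hst⟩

lemma condExp_ae_eq_condExp_of_le_aeCompletion {Ω : Type*} {m m' m₀ : MeasurableSpace Ω}
    {μ : Measure[m₀] Ω} [IsFiniteMeasure μ] (hm : m' ≤ m) (hm₀ : m ≤ m₀)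
    (hcompl : m ≤ aeCompletion m' μ) (f : Ω → ℝ) : μ[f | m'] =ᵐ[μ] μ[f | m] := by
  by_cases hf : Integrable f μ
  · refine ae_eq_condExp_of_forall_setIntegral_eq hm₀ hf
      (fun _ _ _ => integrable_condExp.integrableOn) (fun s hs _ => ?_)
      (stronglyMeasurable_condExp.mono hm).aestronglyMeasurable
    obtain ⟨t, ht, hst⟩ := hcompl s hs
    rw [setIntegral_congr_set hst, setIntegral_condExp (hm.trans hm₀) hf ht,
      setIntegral_congr_set hst]
  · simp only [condExp_of_not_integrable hf, EventuallyEq.rfl]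

end MeasureTheory

namespace CCXPaper

section Distribution

variable {Ω : Type*} [MeasurableSpace Ω] {P : Measure Ω} {Z : Ω → ℝ}

lemma monotone_cdfRV [IsFiniteMeasure P] : Monotone (cdfRV P Z) := fun _ _ hab =>
  ENNReal.toReal_mono (measure_ne_top _ _) (measure_mono fun _ hω => le_trans hω hab)

variable [IsProbabilityMeasure P]

lemma cdfRV_eq_cdf_map (hZ : Measurable Z) : cdfRV P Z = cdf (P.map Z) := by
  have := Measure.isProbabilityMeasure_map (μ := P) hZ.aemeasurable
  ext y
  rw [cdf_eq_real, measureReal_def, Measure.map_apply hZ measurableSet_Iic]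
  rfl

lemma measure_Ioc_eq_zero_of_cdfRV_le (hZ : Measurable Z) {a b : ℝ}
    (hab : cdfRV P Z b ≤ cdfRV P Z a) : P {ω | a < Z ω ∧ Z ω ≤ b} = 0 := by
  have := Measure.isProbabilityMeasure_map (μ := P) hZ.aemeasurable
  have h := (cdf (P.map Z)).measure_Ioc a b
  rw [measure_cdf, Measure.map_apply hZ measurableSet_Ioc, ← cdfRV_eq_cdf_map hZ,
    ENNReal.ofReal_eq_zero.2 (sub_nonpos.2 hab)] at h
  exact h

lemma measure_lt_and_cdfRV_le_eq_zero (hZ : Measurable Z) (y : ℝ) :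
    P {ω | y < Z ω ∧ cdfRV P Z (Z ω) ≤ cdfRV P Z y} = 0 := by
  set S := {z | y < z ∧ cdfRV P Z z ≤ cdfRV P Z y}
  set T := S ∩ (range ((↑) : ℚ → ℝ) ∪ {w | IsGreatest S w})
  have hT : T.Countable :=
    ((countable_range _).union
      (show {w | IsGreatest S w}.Subsingleton from fun _ h₁ _ h₂ => h₁.unique h₂).countable).mono
      inter_subset_right
  -- `S` is an interval, so it is exhausted by the `(y, w]` with `w ∈ S` rational or `w = max S`.
  have hcover : S ⊆ ⋃ w ∈ T, Ioc y w := by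
    intro z hz
    by_cases hmax : IsGreatest S z
    · exact mem_biUnion ⟨hz, Or.inr hmax⟩ ⟨hz.1, le_rfl⟩
    · obtain ⟨z', hz', hzz'⟩ : ∃ z' ∈ S, z < z' := by
        simpa [IsGreatest, upperBounds, hz] using hmax
      obtain ⟨r, hzr, hrz'⟩ := exists_rat_btwn hzz'
      have hr : (r : ℝ) ∈ S := ⟨hz.1.trans hzr, (monotone_cdfRV hrz'.le).trans hz'.2⟩
      exact mem_biUnion ⟨hr, Or.inl ⟨r, rfl⟩⟩ ⟨hz.1, hzr.le⟩
  refine measure_mono_null (preimage_mono (f := Z) hcover) ?_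
  rw [preimage_iUnion₂, measure_biUnion_null_iff hT]
  exact fun w hw => measure_Ioc_eq_zero_of_cdfRV_le hZ hw.1.2

lemma setOf_cdfRV_le_ae_eq (hZ : Measurable Z) (a : ℝ) :
    {ω | cdfRV P Z (Z ω) ≤ cdfRV P Z a} =ᵐ[P] {ω | Z ω ≤ a} := by
  refine ae_eq_set.2 ⟨measure_mono_null ?_ (measure_lt_and_cdfRV_le_eq_zero hZ a), ?_⟩
  · exact fun ω ⟨hle, hgt⟩ => ⟨not_le.1 hgt, hle⟩
  · exact measure_mono_null (fun ω ⟨hle, hgt⟩ => hgt (monotone_cdfRV hle)) measure_empty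

lemma cdfRV_cdfRV_comp (hZ : Measurable Z) (y : ℝ) :
    cdfRV P (fun ω => cdfRV P Z (Z ω)) (cdfRV P Z y) = cdfRV P Z y :=
  congrArg ENNReal.toReal (measure_congr (setOf_cdfRV_le_ae_eq hZ y))

lemma quantRV_le_iff (hZ : Measurable Z) {v z : ℝ} (hv : v ∈ Ioo (0 : ℝ) 1) :
    quantRV P Z v ≤ z ↔ v ≤ cdfRV P Z z := by
  unfold quantRV
  rw [cdfRV_eq_cdf_map hZ]
  obtain ⟨y₀, hy₀⟩ := ((tendsto_cdf_atBot _).eventually (gt_mem_nhds hv.1)).exists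
  obtain ⟨y₁, hy₁⟩ := ((tendsto_cdf_atTop _).eventually (lt_mem_nhds hv.2)).exists
  refine (cdf (P.map Z)).sInf_le_iff ⟨y₀, fun y hy => ?_⟩ ⟨y₁, hy₁.le⟩
  exact le_of_not_gt fun hlt => (hy.trans (monotone_cdf _ hlt.le)).not_gt hy₀

end Distribution

section Invariance

variable {Ω : Type*} [MeasurableSpace Ω] {P : Measure Ω}

lemma ccxEq_of_condProbGE_ae_eq {β γ : Type*} [MeasurableSpace β] [MeasurableSpace γ]
    {Y Y' : Ω → ℝ} {X : Ω → β} {X' : Ω → γ}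
    (h : ∀ v ∈ Ioo (0 : ℝ) 1,
      condProbGE P Y X (quantRV P Y v) =ᵐ[P] condProbGE P Y' X' (quantRV P Y' v)) :
    CCXeq P Y X P Y' X' :=
  ⟨fun v hv φ _ => (integral_congr_ae ((h v hv).fun_comp φ)).le,
    fun v hv φ _ => (integral_congr_ae ((h v hv).symm.fun_comp φ)).le⟩

variable [IsProbabilityMeasure P]

lemma ccxEq_cdfRV_comp {β : Type*} [MeasurableSpace β] {Y : Ω → ℝ} (hY : Measurable Y)
    (X : Ω → β) : CCXeq P Y X P (fun ω => cdfRV P Y (Y ω)) X := by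
  refine ccxEq_of_condProbGE_ae_eq fun v hv => EventuallyEq.of_eq ?_
  have hW : Measurable fun ω => cdfRV P Y (Y ω) := monotone_cdfRV.measurable.comp hY
  unfold condProbGE
  congr 1
  ext ω
  change quantRV P Y v ≤ Y ω ↔ quantRV P _ v ≤ cdfRV P Y (Y ω)
  rw [quantRV_le_iff hY hv, quantRV_le_iff hW hv, cdfRV_cdfRV_comp hY]

lemma comap_le_aeCompletion_comap_cdfRV {ι : Type*} {X : Ω → ι → ℝ} (hX : Measurable X) :
    MeasurableSpace.comap X inferInstance ≤
      aeCompletion (MeasurableSpace.comap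
        (fun ω k => cdfRV P (fun ω' => X ω' k) (X ω k)) inferInstance) P := by
  refine Measurable.comap_le
    ((@measurable_pi_iff Ω ι _ (aeCompletion _ P) _ X).2 fun k => measurable_of_Iic fun a => ?_)
  have hXk : Measurable fun ω => X ω k := measurable_pi_apply k |>.comp hX
  exact ⟨_, ⟨{u | u k ≤ cdfRV P (fun ω' => X ω' k) a},
    measurableSet_le (measurable_pi_apply k) measurable_const, rfl⟩,
    (setOf_cdfRV_le_ae_eq hXk a).symm⟩

lemma ccxEq_cdfRV_comp_coord {ι : Type*} {X : Ω → ι → ℝ} (hX : Measurable X) (Y : Ω → ℝ) :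
    CCXeq P Y X P Y (fun ω k => cdfRV P (fun ω' => X ω' k) (X ω k)) := by
  have hg : Measurable fun (u : ι → ℝ) k => cdfRV P (fun ω' => X ω' k) (u k) :=
    measurable_pi_lambda _ fun k => monotone_cdfRV.measurable.comp (measurable_pi_apply k)
  refine ccxEq_of_condProbGE_ae_eq fun v _ =>
    (condExp_ae_eq_condExp_of_le_aeCompletion ?_ hX.comap_le
      (comap_le_aeCompletion_comap_cdfRV hX) _).symm
  exact (hg.comp (comap_measurable X)).comap_le

end Invariance

end CCXPaper

open CCXPaper in
theorem ccx_distributional_invariance_general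
    {Ω : Type*} [MeasurableSpace Ω] (P : Measure Ω) [IsProbabilityMeasure P]
    {p : ℕ} (Y : Ω → ℝ) (X : Ω → Fin p → ℝ)
    (hY : Measurable Y) (hX : Measurable X) :
    CCXeq P Y X P (fun ω => cdfRV P Y (Y ω)) X ∧
      CCXeq P Y X P Y (fun ω k => cdfRV P (fun ω' => X ω' k) (X ω k)) :=
  ⟨ccxEq_cdfRV_comp hY X, ccxEq_cdfRV_comp_coord hX Y⟩

open CCXPaper in
/-- Distributional invariance:
`(Y, X) =ccx (F_Y(Y), X)` and `(Y, X) =ccx (Y, (F_{X_1}(X_1), …, F_{X_p}(X_p)))`. -/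
theorem ccx_distributional_invariance
    {Ω : Type*} [MeasurableSpace Ω] (P : Measure Ω) [IsProbabilityMeasure P]
    (hPna : Nonatomic P)
    {p : ℕ} (Y : Ω → ℝ) (X : Ω → Fin p → ℝ)
    (hY : Measurable Y) (hX : Measurable X) :
    CCXeq P Y X P (fun ω => cdfRV P Y (Y ω)) X ∧
      CCXeq P Y X P Y (fun ω k => cdfRV P (fun ω' => X ω' k) (X ω k)) :=
  ccx_distributional_invariance_general P Y X hY hX
end
end

section
/- Data processing inequality and self-equitability of the conditional convex order. (i) If Y and Z are conditionally independent given X, then (Y,Z) ⪯ccx (Y,X); in particular (Y, h(X)) ⪯ccx (Y,X) for every measurable function h. (ii) If h is a measurable function such that Y and X are conditionally independent given h(X), then (Y, h(X)) =ccx (Y,X). -/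
open MeasureTheory ProbabilityTheory Set Filter

noncomputable section

section Helpers

open MeasureTheory CCXPaper

/-- Every convex function on `ℝ` has a subgradient at every point. -/
lemma myExistsSubgrad {φ : ℝ → ℝ} (hφ : ConvexOn ℝ Set.univ φ) (q : ℝ) :
    ∃ c : ℝ, ∀ x : ℝ, φ q + c * (x - q) ≤ φ x := by
  have hslope : ∀ x y z : ℝ, x < y → y < z →
      (φ y - φ x) / (y - x) ≤ (φ z - φ y) / (z - y) := fun x y z hxy hyz =>
    hφ.slope_mono_adjacent trivial trivial hxy hyz
  set S : Set ℝ := (fun r => (φ r - φ q) / (r - q)) '' Set.Ioi q with hSdef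
  have hne : S.Nonempty := ⟨_, ⟨q + 1, by simp, rfl⟩⟩
  have hbdd : BddBelow S := by
    refine ⟨(φ q - φ (q - 1)) / (q - (q - 1)), ?_⟩
    rintro s ⟨r, hr, rfl⟩
    exact hslope (q - 1) q r (by linarith) hr
  refine ⟨sInf S, fun x => ?_⟩
  rcases lt_trichotomy x q with hx | rfl | hx
  · have hmem : ∀ s ∈ S, (φ q - φ x) / (q - x) ≤ s := by
      rintro s ⟨r, hr, rfl⟩
      exact hslope x q r hx hr
    have h1 : (φ q - φ x) / (q - x) ≤ sInf S := le_csInf hne hmem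
    have hpos : (0:ℝ) < q - x := by linarith
    have h2 : φ q - φ x ≤ sInf S * (q - x) := by
      calc φ q - φ x = (φ q - φ x) / (q - x) * (q - x) := by field_simp
        _ ≤ sInf S * (q - x) := mul_le_mul_of_nonneg_right h1 hpos.le
    have h3 : sInf S * (x - q) = -(sInf S * (q - x)) := by ring
    linarith
  · simp
  · have h1 : sInf S ≤ (φ x - φ q) / (x - q) := csInf_le hbdd ⟨x, hx, rfl⟩
    have hpos : (0:ℝ) < x - q := by linarith
    have h2 : sInf S * (x - q) ≤ φ x - φ q := by
      calc sInf S * (x - q) ≤ (φ x - φ q) / (x - q) * (x - q) :=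
            mul_le_mul_of_nonneg_right h1 hpos.le
        _ = φ x - φ q := by field_simp
    linarith

/-- If each rational supporting line is `≤ M` at `x`, then `φ x ≤ M`. -/
lemma mySupSubgrad {φ : ℝ → ℝ} (hφ : ConvexOn ℝ Set.univ φ)
    (c : ℚ → ℝ) (hc : ∀ q : ℚ, ∀ x : ℝ, φ (q:ℝ) + c q * (x - q) ≤ φ x)
    {x M : ℝ} (hM : ∀ q : ℚ, φ (q:ℝ) + c q * (x - q) ≤ M) : φ x ≤ M := by
  have hcont : Continuous φ := hφ.locallyLipschitz.continuous
  refine le_of_forall_pos_le_add fun ε hε => ?_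
  obtain ⟨δ, hδpos, hδ⟩ :=
    Metric.continuousAt_iff.mp hcont.continuousAt (ε/2) (by linarith)
  obtain ⟨z, hz, hzK⟩ := isCompact_Icc.exists_isMaxOn
    (Set.nonempty_Icc.mpr (by linarith : x ≤ x + 2)) hcont.continuousOn
  set K := φ z with hK
  set M₁ : ℝ := max (K - φ x + ε/2) 1 with hM₁
  have hM₁pos : (0:ℝ) < M₁ := lt_of_lt_of_le one_pos (le_max_right _ _)
  have hub : x < x + min (min δ 1) (ε/(2*M₁)) := by
    have h1 : (0:ℝ) < min (min δ 1) (ε/(2*M₁)) := by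
      apply lt_min (lt_min hδpos one_pos)
      positivity
    linarith
  obtain ⟨q, hq1, hq2⟩ := exists_rat_btwn hub
  have hqx : x < (q:ℝ) := hq1
  have hqδ : (q:ℝ) - x < δ := by
    have := lt_of_lt_of_le hq2 (add_le_add_right ((min_le_left _ _).trans (min_le_left _ _)) x)
    linarith
  have hq1' : (q:ℝ) - x < 1 := by
    have := lt_of_lt_of_le hq2 (add_le_add_right ((min_le_left _ _).trans (min_le_right _ _)) x)
    linarith
  have hqε : (q:ℝ) - x < ε/(2*M₁) := by
    have := lt_of_lt_of_le hq2 (add_le_add_right (min_le_right _ _) x)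
    linarith
  have hφq : φ x - ε/2 < φ (q:ℝ) := by
    have hd : dist (q:ℝ) x < δ := by
      rw [Real.dist_eq, abs_of_pos (by linarith : (0:ℝ) < (q:ℝ) - x)]
      exact hqδ
    have := hδ hd
    rw [Real.dist_eq] at this
    have := abs_lt.mp this
    linarith [this.1]
  have hcq : c q ≤ φ ((q:ℝ)+1) - φ (q:ℝ) := by
    have h := hc q ((q:ℝ)+1)
    have he : ((q:ℝ)+1) - (q:ℝ) = 1 := by ring
    rw [he, mul_one] at h
    linarith
  have hq1K : φ ((q:ℝ)+1) ≤ K := hzK ⟨by linarith, by linarith⟩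
  have hcqM : c q ≤ M₁ := by
    have : c q ≤ K - φ x + ε/2 := by linarith
    exact this.trans (le_max_left _ _)
  have h1 : M₁ * (x - (q:ℝ)) ≤ c q * (x - (q:ℝ)) :=
    mul_le_mul_of_nonpos_right hcqM (by linarith)
  have h2 : M₁ * ((q:ℝ) - x) ≤ M₁ * (ε/(2*M₁)) :=
    mul_le_mul_of_nonneg_left hqε.le hM₁pos.le
  have h3 : M₁ * (ε/(2*M₁)) = ε/2 := by
    field_simp
  have h4 : M₁ * (x - (q:ℝ)) = -(M₁ * ((q:ℝ) - x)) := by ring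
  have h5 := hM q
  linarith

/-- Jensen's inequality for conditional expectation, in integral (convex-order) form,
for a.e.-`[0,1]`-valued random variables. -/
lemma myCxLE_condexp {Ω : Type*} [m0 : MeasurableSpace Ω] (P : Measure Ω)
    [IsProbabilityMeasure P] {m : MeasurableSpace Ω} (hm : m ≤ m0)
    {T S : Ω → ℝ} (hT0 : 0 ≤ᵐ[P] T) (hT1 : T ≤ᵐ[P] fun _ => (1:ℝ))
    (hTi : Integrable T P) (hS : S =ᵐ[P] P[T|m]) :
    @CxLE Ω Ω m0 m0 P S P T := by
  intro φ hφ
  have hcont : Continuous φ := hφ.locallyLipschitz.continuous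
  obtain ⟨C, hC⟩ : ∃ C : ℝ, ∀ y ∈ Set.Icc (0:ℝ) 1, |φ y| ≤ C := by
    obtain ⟨z, hz, hzK⟩ := isCompact_Icc.exists_isMaxOn
      (Set.nonempty_Icc.mpr zero_le_one) hcont.abs.continuousOn
    exact ⟨|φ z|, fun y hy => hzK hy⟩
  set g := P[T|m] with hg
  have hg0 : 0 ≤ᵐ[P] g := condExp_nonneg hT0
  have hg1 : g ≤ᵐ[P] fun _ => (1:ℝ) := by
    have h1 := condExp_mono (m := m) hTi (integrable_const (1:ℝ)) hT1
    rwa [condExp_const hm (1:ℝ)] at h1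
  have hφT : Integrable (fun ω => φ (T ω)) P := by
    refine Integrable.mono' (integrable_const C)
      (hcont.comp_aestronglyMeasurable hTi.1) ?_
    filter_upwards [hT0, hT1] with ω h0 h1
    simpa [Real.norm_eq_abs] using hC (T ω) ⟨h0, h1⟩
  have hφg : Integrable (fun ω => φ (g ω)) P := by
    refine Integrable.mono' (integrable_const C)
      (hcont.comp_aestronglyMeasurable
        (stronglyMeasurable_condExp.mono hm).aestronglyMeasurable) ?_
    filter_upwards [hg0, hg1] with ω h0 h1
    simpa [Real.norm_eq_abs] using hC (g ω) ⟨h0, h1⟩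
  choose c hc using fun q : ℚ => myExistsSubgrad hφ (q:ℝ)
  have key : ∀ q : ℚ, ∀ᵐ ω ∂P,
      φ (q:ℝ) + c q * (g ω - q) ≤ (P[fun ω => φ (T ω)|m]) ω := by
    intro q
    set d : ℝ := φ (q:ℝ) - c q * (q:ℝ) with hd
    have h1 : P[(c q • T) + (fun _ => d)|m] ≤ᵐ[P] P[fun ω => φ (T ω)|m] := by
      refine condExp_mono ((hTi.smul (c q)).add (integrable_const d)) hφT ?_
      refine Filter.Eventually.of_forall fun ω => ?_
      have h := hc q (T ω)
      show c q * T ω + d ≤ φ (T ω)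
      rw [hd]; linarith
    have hcst : P[(fun _ : Ω => d)|m] = fun _ => d := condExp_const hm d
    have ha := condExp_add (μ := P) (m := m) (hTi.smul (c q)) (integrable_const d)
    have hb := condExp_smul (μ := P) (m := m) (c q) T
    have h2 : P[(c q • T) + (fun _ => d)|m] =ᵐ[P]
        fun ω => φ (q:ℝ) + c q * (g ω - q) := by
      filter_upwards [ha, hb] with ω hωa hωb
      rw [hωa, Pi.add_apply, hcst, hωb, Pi.smul_apply, smul_eq_mul, hd]
      show c q * g ω + (φ (q:ℝ) - c q * (q:ℝ)) = _
      ring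
    filter_upwards [h1, h2] with ω hω1 hω2
    rw [← hω2]; exact hω1
  have key2 : ∀ᵐ ω ∂P, φ (g ω) ≤ (P[fun ω => φ (T ω)|m]) ω := by
    have hall := (ae_all_iff).mpr key
    filter_upwards [hall] with ω hω
    exact mySupSubgrad hφ c hc hω
  calc ∫ ω, φ (S ω) ∂P = ∫ ω, φ (g ω) ∂P :=
        integral_congr_ae (hS.fun_comp φ)
    _ ≤ ∫ ω, (P[fun ω => φ (T ω)|m]) ω ∂P :=
        integral_mono_ae hφg integrable_condExp key2
    _ = ∫ ω, φ (T ω) ∂P := integral_condExp hm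

/-- If for every `y`, `P(Y ≥ y | Z)` is (a.e.) the conditional expectation of
`P(Y ≥ y | X)` given `σ(Z)`, then `(Y,Z) ⪯ccx (Y,X)`. -/
lemma myCCX_of_condexp {Ω : Type*} [MeasurableSpace Ω] (P : Measure Ω)
    [IsProbabilityMeasure P] {β γ : Type*} [MeasurableSpace β] [MeasurableSpace γ]
    (Y : Ω → ℝ) (X : Ω → β) (Z : Ω → γ)
    (hY : Measurable Y) (hX : Measurable X) (hZ : Measurable Z)
    (hcond : ∀ y : ℝ,
      condProbGE P Y Z y =ᵐ[P]
        P[condProbGE P Y X y | MeasurableSpace.comap Z inferInstance]) :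
    CCX P Y Z P Y X := by
  intro v hv
  set q := quantRV P Y v with hq
  have hsmeas : MeasurableSet {ω | q ≤ Y ω} := measurableSet_le measurable_const hY
  have hind : Integrable ({ω | q ≤ Y ω}.indicator fun _ => (1:ℝ)) P :=
    (integrable_const (1:ℝ)).indicator hsmeas
  have hT0 : 0 ≤ᵐ[P] condProbGE P Y X q :=
    condExp_nonneg (Filter.Eventually.of_forall fun ω =>
      Set.indicator_nonneg (fun _ _ => zero_le_one) ω)
  have hT1 : condProbGE P Y X q ≤ᵐ[P] fun _ => (1:ℝ) := by
    have h1 := condExp_mono (m := MeasurableSpace.comap X inferInstance)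
      hind (integrable_const (1:ℝ))
      (Filter.Eventually.of_forall fun ω =>
        Set.indicator_le_self' (fun _ _ => zero_le_one) ω)
    rwa [condExp_const hX.comap_le (1:ℝ)] at h1
  exact myCxLE_condexp P hZ.comap_le hT0 hT1 integrable_condExp (hcond q)

end Helpers

open CCXPaper in
/-- Data processing inequality and self-equitability of the conditional
convex order:
(i) if `Y ⟂ Z | X` then `(Y, Z) ⪯ccx (Y, X)`; in particular `(Y, h(X)) ⪯ccx (Y, X)`
for every measurable `h`;
(ii) if `Y ⟂ X | h(X)` then `(Y, h(X)) =ccx (Y, X)`. -/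
theorem ccx_data_processing_and_self_equitability
    {Ω : Type*} [MeasurableSpace Ω] (P : Measure Ω) [IsProbabilityMeasure P]
    (hPna : Nonatomic P)
    {p r : ℕ} (Y : Ω → ℝ) (X : Ω → Fin p → ℝ) (Z : Ω → Fin r → ℝ)
    (hY : Measurable Y) (hX : Measurable X) (hZ : Measurable Z) :
    (CondIndepGiven P Y Z X → CCX P Y Z P Y X) ∧
    (∀ (r' : ℕ) (h : (Fin p → ℝ) → Fin r' → ℝ), Measurable h →
        CCX P Y (fun ω => h (X ω)) P Y X) ∧
    (∀ (r' : ℕ) (h : (Fin p → ℝ) → Fin r' → ℝ), Measurable h →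
        CondIndepGiven P Y X (fun ω => h (X ω)) →
        CCXeq P Y (fun ω => h (X ω)) P Y X) := by
  classical
  have hXm0 := hX.comap_le
  refine ⟨?_, ?_, ?_⟩
  · -- (i) data processing
    intro hCI
    refine myCCX_of_condexp P Y X Z hY hX hZ fun y => ?_
    have hpairm : Measurable fun ω => (X ω, Z ω) := hX.prodMk hZ
    have hZpair : MeasurableSpace.comap Z inferInstance ≤
        MeasurableSpace.comap (fun ω => (X ω, Z ω)) inferInstance := by
      have hZm : @Measurable Ω (Fin r → ℝ)
          (MeasurableSpace.comap (fun ω => (X ω, Z ω)) inferInstance) _ Z :=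
        measurable_snd.comp (Measurable.of_comap_le le_rfl)
      exact hZm.comap_le
    have htower := (condExp_condExp_of_le (μ := P)
      (f := ({ω | y ≤ Y ω}.indicator fun _ => (1:ℝ))) hZpair hpairm.comap_le).symm
    have hci : (P[({ω | y ≤ Y ω}.indicator fun _ => (1:ℝ)) |
          MeasurableSpace.comap (fun ω => (X ω, Z ω)) inferInstance]) =ᵐ[P]
        condProbGE P Y X y := hCI (Set.Ici y) measurableSet_Ici
    exact htower.trans (condExp_congr_ae hci)
  · -- (i') h(X) case
    intro r' h hh
    refine myCCX_of_condexp P Y X (fun ω => h (X ω)) hY hX (hh.comp hX) fun y => ?_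
    have hhX : MeasurableSpace.comap (fun ω => h (X ω)) inferInstance ≤
        MeasurableSpace.comap X inferInstance :=
      (hh.comp (Measurable.of_comap_le le_rfl)).comap_le
    exact (condExp_condExp_of_le (μ := P)
      (f := ({ω | y ≤ Y ω}.indicator fun _ => (1:ℝ))) hhX hXm0).symm
  · -- (ii) self-equitability
    intro r' h hh hCI
    have hcomap : MeasurableSpace.comap (fun ω => (h (X ω), X ω)) inferInstance =
        MeasurableSpace.comap X inferInstance := by
      apply le_antisymm
      · exact (Measurable.prodMk (hh.comp (Measurable.of_comap_le le_rfl))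
          (Measurable.of_comap_le le_rfl)).comap_le
      · have hXm : @Measurable Ω (Fin p → ℝ)
            (MeasurableSpace.comap (fun ω => (h (X ω), X ω)) inferInstance) _ X :=
          measurable_snd.comp (Measurable.of_comap_le le_rfl)
        exact hXm.comap_le
    have hkey : ∀ y : ℝ, condProbGE P Y X y =ᵐ[P] condProbGE P Y (fun ω => h (X ω)) y := by
      intro y
      have h1 := hCI (Set.Ici y) measurableSet_Ici
      have h2 : condProb P (fun ω => (h (X ω), X ω)) (Y ⁻¹' Set.Ici y) =
          condProb P X (Y ⁻¹' Set.Ici y) := by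
        unfold condProb
        rw [hcomap]
      rw [h2] at h1
      exact h1
    constructor
    · -- (Y, h(X)) ⪯ccx (Y, X)
      refine myCCX_of_condexp P Y X (fun ω => h (X ω)) hY hX (hh.comp hX) fun y => ?_
      have hhX : MeasurableSpace.comap (fun ω => h (X ω)) inferInstance ≤
          MeasurableSpace.comap X inferInstance :=
        (hh.comp (Measurable.of_comap_le le_rfl)).comap_le
      exact (condExp_condExp_of_le (μ := P)
        (f := ({ω | y ≤ Y ω}.indicator fun _ => (1:ℝ))) hhX hXm0).symm
    · -- (Y, X) ⪯ccx (Y, h(X))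
      intro v hv φ hφ
      exact le_of_eq (integral_congr_ae ((hkey (quantRV P Y v)).fun_comp φ))
end
end
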